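/- arXiv:1209.1419 — 8 statements merged into one kernel-verified Lean document; each statement's English description precedes it below -/
import Mathlib

section
/- For every open quantum random walk on ℤ generated by matrices B, C and with initial density matrix ρ₀, the probability distribution of the walk is given by the dual process through p_x^{(n)} = (1/(2π)) ∫_{-π}^{π} e^{ikx} Tr(ρ₀ Y_n(k)) dk, for all x ∈ ℤ and all n ≥ 0. -/
open MeasureTheory Filter Matrix
open scoped ComplexOrder

/-- The state of the open quantum random walk on `ℤ` generated by `B, C`
with initial density matrix `ρ₀`. -/
noncomputable def oqrwState (B C ρ₀ : Matrix (Fin 2) (Fin 2) ℂ) :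
    ℕ → ℤ → Matrix (Fin 2) (Fin 2) ℂ
  | 0, x => if x = 0 then ρ₀ else 0
  | n + 1, x =>
      B * oqrwState B C ρ₀ n (x + 1) * Bᴴ + C * oqrwState B C ρ₀ n (x - 1) * Cᴴ

/-- The dual process `Y_n(k)` of the OQRW generated by `B, C`:
`Y_0(k) = I`, `Y_{n+1}(k) = e^{ik} B* Y_n(k) B + e^{-ik} C* Y_n(k) C`. -/
noncomputable def oqrwDual (B C : Matrix (Fin 2) (Fin 2) ℂ) :
    ℕ → ℝ → Matrix (Fin 2) (Fin 2) ℂ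
  | 0, _ => 1
  | n + 1, k =>
      Complex.exp (Complex.I * k) • (Bᴴ * oqrwDual B C n k * B) +
        Complex.exp (-(Complex.I * k)) • (Cᴴ * oqrwDual B C n k * C)

/-
The identity holds for every matrix `ρ₀`, which lets it be proved by induction on `n` through the
first step of the walk:
`ρ_x^{(n+1)}[ρ₀] = ρ_{x+1}^{(n)}[B ρ₀ B*] + ρ_{x-1}^{(n)}[C ρ₀ C*]`, while cycling the trace gives
`Tr(ρ₀ Y_{n+1}(k)) = e^{ik} Tr(B ρ₀ B* Y_n(k)) + e^{-ik} Tr(C ρ₀ C* Y_n(k))`; the factors `e^{±ik}`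
shift the Fourier mode `e^{ikx}` to `e^{ik(x±1)}`. The base case is the orthogonality
`∫_{-π}^{π} e^{ikx} dk = 2π δ_{x,0}`.
-/

open Complex

theorem Matrix.trace_mul_sandwich {m p R : Type*} [Fintype m] [Fintype p]
    [NonUnitalCommSemiring R] (ρ : Matrix m m R) (N : Matrix m p R) (Y : Matrix p p R)
    (M : Matrix p m R) : (ρ * (N * Y * M)).trace = (M * ρ * N * Y).trace := by
  simp only [← Matrix.mul_assoc]
  rw [Matrix.trace_mul_cycle (ρ * N) Y M]
  simp only [← Matrix.mul_assoc]

theorem inv_two_pi_mul_integral_exp_mul_int (x : ℤ) :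
    1 / (2 * (Real.pi : ℂ)) * ∫ k in (-Real.pi)..Real.pi, exp (I * k * x) =
      if x = 0 then 1 else 0 := by
  split_ifs with hx
  · subst hx
    have hπ : (Real.pi : ℂ) ≠ 0 := ofReal_ne_zero.mpr Real.pi_ne_zero
    simp only [Int.cast_zero, mul_zero, exp_zero, intervalIntegral.integral_const, sub_neg_eq_add,
      ← two_mul, real_smul, mul_one]
    push_cast
    field_simp
  · have hc : I * x ≠ 0 := mul_ne_zero I_ne_zero (Int.cast_ne_zero.mpr hx)
    have h_endpoints : exp (I * x * Real.pi) = exp (I * x * (-Real.pi : ℝ)) := by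
      have := (exp_periodic.int_mul x) (I * x * (-Real.pi : ℝ))
      rw [← this]
      congr 1
      push_cast
      ring
    have h_integrand : (fun k : ℝ => exp (I * k * x)) = fun k : ℝ => exp (I * x * k) := by
      ext k
      ring_nf
    rw [h_integrand, integral_exp_mul_complex hc, h_endpoints, sub_self, zero_div, mul_zero]

section

variable (B C : Matrix (Fin 2) (Fin 2) ℂ)

theorem oqrwState_succ' (ρ : Matrix (Fin 2) (Fin 2) ℂ) (n : ℕ) (x : ℤ) :
    oqrwState B C ρ (n + 1) x =
      oqrwState B C (B * ρ * Bᴴ) n (x + 1) + oqrwState B C (C * ρ * Cᴴ) n (x - 1) := by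
  induction n generalizing x with
  | zero =>
    simp only [oqrwState]
    split_ifs <;> simp
  | succ n ih =>
    rw [oqrwState, ih (x + 1), ih (x - 1), oqrwState, oqrwState, add_sub_cancel_right,
      sub_add_cancel]
    simp only [Matrix.mul_add, Matrix.add_mul]
    abel

theorem continuous_oqrwDual (n : ℕ) : Continuous (oqrwDual B C n) := by
  induction n with
  | zero => exact continuous_const
  | succ n ih =>
    simp only [oqrwDual]
    fun_prop

theorem trace_mul_oqrwDual_succ (ρ : Matrix (Fin 2) (Fin 2) ℂ) (n : ℕ) (k : ℝ) :
    (ρ * oqrwDual B C (n + 1) k).trace =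
      exp (I * k) * (B * ρ * Bᴴ * oqrwDual B C n k).trace +
        exp (-(I * k)) * (C * ρ * Cᴴ * oqrwDual B C n k).trace := by
  rw [oqrwDual, Matrix.mul_add, Matrix.mul_smul, Matrix.mul_smul, Matrix.trace_add,
    Matrix.trace_smul, Matrix.trace_smul, Matrix.trace_mul_sandwich, Matrix.trace_mul_sandwich,
    smul_eq_mul, smul_eq_mul]

theorem intervalIntegrable_exp_mul_trace_oqrwDual (ρ : Matrix (Fin 2) (Fin 2) ℂ) (n : ℕ)
    (x : ℤ) (a b : ℝ) :
    IntervalIntegrable (fun k : ℝ => exp (I * k * x) * (ρ * oqrwDual B C n k).trace) volume a b :=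
  have := continuous_oqrwDual B C n
  (by fun_prop : Continuous _).intervalIntegrable a b

end

theorem oqrw_prob_eq_dual_general (B C ρ₀ : Matrix (Fin 2) (Fin 2) ℂ)
    (n : ℕ) (x : ℤ) :
    (oqrwState B C ρ₀ n x).trace =
      (1 / (2 * (Real.pi : ℂ))) *
        ∫ k in (-Real.pi)..Real.pi,
          Complex.exp (Complex.I * k * x) * (ρ₀ * oqrwDual B C n k).trace := by
  induction n generalizing ρ₀ x with
  | zero =>
    simp only [oqrwState, oqrwDual, Matrix.mul_one, intervalIntegral.integral_mul_const]
    rw [← mul_assoc, inv_two_pi_mul_integral_exp_mul_int]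
    split_ifs <;> simp
  | succ n ih =>
    rw [oqrwState_succ', Matrix.trace_add, ih, ih, ← mul_add,
      ← intervalIntegral.integral_add (intervalIntegrable_exp_mul_trace_oqrwDual ..)
        (intervalIntegrable_exp_mul_trace_oqrwDual ..)]
    congr 1
    refine intervalIntegral.integral_congr fun k _ => ?_
    simp only [trace_mul_oqrwDual_succ, Int.cast_add, Int.cast_sub, Int.cast_one, mul_add, mul_sub,
      mul_one, exp_add, exp_sub, exp_neg]
    field_simp

/-- The distribution of the OQRW is given by the dual process:
`p_x^{(n)} = (1/(2π)) ∫_{-π}^{π} e^{ikx} Tr(ρ₀ Y_n(k)) dk`. -/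
theorem oqrw_prob_eq_dual (B C ρ₀ : Matrix (Fin 2) (Fin 2) ℂ)
    (hBC : Bᴴ * B + Cᴴ * C = 1) (hpos : ρ₀.PosSemidef) (htr : ρ₀.trace = 1)
    (n : ℕ) (x : ℤ) :
    (oqrwState B C ρ₀ n x).trace =
      (1 / (2 * (Real.pi : ℂ))) *
        ∫ k in (-Real.pi)..Real.pi,
          Complex.exp (Complex.I * k * x) * (ρ₀ * oqrwDual B C n k).trace :=
  oqrw_prob_eq_dual_general B C ρ₀ n x
end

section
/- Let [a,b] ⊂ ℝ be a finite interval and f : [a,b] → ℝ a continuous function such that |f| attains its maximum at a unique point c ∈ [a,b] (i.e., |f(x)| < |f(c)| for all x ≠ c) with f(c) ≠ 0. Set α_n = ∫_a^b f(x)^n dx. Then there exists n₀ ∈ ℕ such that α_n ≠ 0 for all n ≥ n₀, and for every continuous function g : [a,b] → ℝ one has lim_{n→∞} (1/α_n) ∫_a^b f(x)^n g(x) dx = g(c). -/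
open MeasureTheory Filter Set
open Topology TopologicalSpace

/-!
Along even exponents `f ^ (2 * m) = (f ^ 2) ^ m`, and `f ^ 2` is a nonnegative weight with a
unique strict maximum at `c`, so the classical peak-function theorem applies. Along odd exponents
`f ^ (2 * m + 1) * g = (f ^ 2) ^ m * (f * g)`, so the ratio is the quotient of the even-exponent
ratios for `f * g` and for `f`, which tend to `f c * g c` and `f c ≠ 0`. The latter limit also
forces `∫ f ^ n` to be eventually nonzero.
-/

theorem Nat.eventually_atTop_of_even_of_odd {p : ℕ → Prop}
    (heven : ∀ᶠ m in atTop, p (2 * m)) (hodd : ∀ᶠ m in atTop, p (2 * m + 1)) :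
    ∀ᶠ n in atTop, p n := by
  obtain ⟨M, hM⟩ := eventually_atTop.1 (heven.and hodd)
  refine eventually_atTop.2 ⟨2 * M, fun n hn => ?_⟩
  obtain ⟨k, rfl | rfl⟩ := Nat.even_or_odd' n
  · exact (hM k (by omega)).1
  · exact (hM k (by omega)).2

theorem Nat.tendsto_atTop_of_even_of_odd {β : Type*} {u : ℕ → β} {l : Filter β}
    (heven : Tendsto (fun m => u (2 * m)) atTop l)
    (hodd : Tendsto (fun m => u (2 * m + 1)) atTop l) :
    Tendsto u atTop l :=
  fun _ hS => Nat.eventually_atTop_of_even_of_odd (heven hS) (hodd hS)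

section PeakPower

variable {α E : Type*} [MeasurableSpace α] [TopologicalSpace α] [BorelSpace α]
  [MetrizableSpace α] {μ : Measure α} [IsLocallyFiniteMeasure μ] [μ.IsOpenPosMeasure]
  [NormedAddCommGroup E] [NormedSpace ℝ E] [CompleteSpace E] {s : Set α} {f : α → ℝ} {x₀ : α}

theorem tendsto_setIntegral_pow_two_mul_smul_of_abs_unique_maximum (hs : IsCompact s)
    (hf : ContinuousOn f s) (hmax : ∀ y ∈ s, y ≠ x₀ → |f y| < |f x₀|) (hf₀ : f x₀ ≠ 0)
    (h₀ : x₀ ∈ closure (interior s)) {g : α → E} (hg : ContinuousOn g s) :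
    Tendsto (fun m : ℕ => (∫ x in s, f x ^ (2 * m) ∂μ)⁻¹ • ∫ x in s, f x ^ (2 * m) • g x ∂μ)
      atTop (𝓝 (g x₀)) := by
  simp_rw [pow_mul]
  exact tendsto_setIntegral_pow_smul_of_unique_maximum_of_isCompact_of_continuousOn hs
    (hf.pow 2) (fun y hy hne => sq_lt_sq.2 (hmax y hy hne)) (fun x _ => sq_nonneg (f x))
    (by positivity) h₀ hg

theorem eventually_setIntegral_pow_two_mul_ne_zero_of_abs_unique_maximum (hs : IsCompact s)
    (hf : ContinuousOn f s) (hmax : ∀ y ∈ s, y ≠ x₀ → |f y| < |f x₀|) (hf₀ : f x₀ ≠ 0)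
    (h₀ : x₀ ∈ closure (interior s)) :
    ∀ᶠ m : ℕ in atTop,
      (∫ x in s, f x ^ (2 * m) ∂μ) ≠ 0 ∧ (∫ x in s, f x ^ (2 * m + 1) ∂μ) ≠ 0 := by
  have hratio := tendsto_setIntegral_pow_two_mul_smul_of_abs_unique_maximum (μ := μ)
    hs hf hmax hf₀ h₀ hf
  filter_upwards [hratio.eventually_ne hf₀] with m hm
  simpa only [smul_eq_mul, ← pow_succ, mul_ne_zero_iff, ne_eq, inv_eq_zero] using hm

theorem eventually_setIntegral_pow_ne_zero_of_abs_unique_maximum (hs : IsCompact s)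
    (hf : ContinuousOn f s) (hmax : ∀ y ∈ s, y ≠ x₀ → |f y| < |f x₀|) (hf₀ : f x₀ ≠ 0)
    (h₀ : x₀ ∈ closure (interior s)) :
    ∀ᶠ n : ℕ in atTop, (∫ x in s, f x ^ n ∂μ) ≠ 0 :=
  have h := eventually_setIntegral_pow_two_mul_ne_zero_of_abs_unique_maximum (μ := μ)
    hs hf hmax hf₀ h₀
  Nat.eventually_atTop_of_even_of_odd (h.mono fun _ => And.left) (h.mono fun _ => And.right)

theorem tendsto_setIntegral_pow_smul_of_abs_unique_maximum (hs : IsCompact s)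
    (hf : ContinuousOn f s) (hmax : ∀ y ∈ s, y ≠ x₀ → |f y| < |f x₀|) (hf₀ : f x₀ ≠ 0)
    (h₀ : x₀ ∈ closure (interior s)) {g : α → E} (hg : ContinuousOn g s) :
    Tendsto (fun n : ℕ => (∫ x in s, f x ^ n ∂μ)⁻¹ • ∫ x in s, f x ^ n • g x ∂μ)
      atTop (𝓝 (g x₀)) := by
  refine Nat.tendsto_atTop_of_even_of_odd
    (tendsto_setIntegral_pow_two_mul_smul_of_abs_unique_maximum hs hf hmax hf₀ h₀ hg) ?_
  have hlim : Tendsto (fun m : ℕ =>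
      ((∫ x in s, f x ^ (2 * m) ∂μ)⁻¹ • ∫ x in s, f x ^ (2 * m) • f x ∂μ)⁻¹ •
        (∫ x in s, f x ^ (2 * m) ∂μ)⁻¹ • ∫ x in s, f x ^ (2 * m) • f x • g x ∂μ)
      atTop (𝓝 ((f x₀)⁻¹ • f x₀ • g x₀)) :=
    ((tendsto_setIntegral_pow_two_mul_smul_of_abs_unique_maximum hs hf hmax hf₀ h₀ hf).inv₀
      hf₀).smul
      (tendsto_setIntegral_pow_two_mul_smul_of_abs_unique_maximum hs hf hmax hf₀ h₀ (hf.smul hg))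
  rw [inv_smul_smul₀ hf₀] at hlim
  refine hlim.congr' ?_
  filter_upwards [eventually_setIntegral_pow_two_mul_ne_zero_of_abs_unique_maximum (μ := μ)
    hs hf hmax hf₀ h₀] with m hm
  rw [smul_smul, smul_eq_mul, mul_inv, inv_inv, mul_right_comm, mul_inv_cancel₀ hm.1, one_mul]
  simp_rw [smul_smul, smul_eq_mul, ← pow_succ]

end PeakPower

/-- Let `f : [a,b] → ℝ` be continuous such that `|f|` has a unique maximum at `c`
with `f c ≠ 0`, and set `α_n = ∫_a^b f(x)^n dx`.  Then `α_n ≠ 0` eventually, and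
for every continuous `g : [a,b] → ℝ`,
`(1/α_n) ∫_a^b f(x)^n g(x) dx → g(c)` as `n → ∞`. -/
theorem laplace_type_asymptotics (a b : ℝ) (hab : a < b)
    (f : ℝ → ℝ) (hf : ContinuousOn f (Set.Icc a b))
    (c : ℝ) (hc : c ∈ Set.Icc a b)
    (hmax : ∀ x ∈ Set.Icc a b, x ≠ c → |f x| < |f c|)
    (hfc : f c ≠ 0) :
    (∃ n₀ : ℕ, ∀ n ≥ n₀, (∫ x in a..b, f x ^ n) ≠ 0) ∧
      ∀ g : ℝ → ℝ, ContinuousOn g (Set.Icc a b) →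
        Tendsto (fun n : ℕ => (∫ x in a..b, f x ^ n * g x) / ∫ x in a..b, f x ^ n)
          atTop (nhds (g c)) := by
  have hc' : c ∈ closure (interior (Icc a b)) := by rwa [interior_Icc, closure_Ioo hab.ne]
  have hIcc (h : ℝ → ℝ) : ∫ x in a..b, h x = ∫ x in Icc a b, h x := by
    rw [intervalIntegral.integral_of_le hab.le, integral_Icc_eq_integral_Ioc]
  refine ⟨?_, fun g hg => ?_⟩
  · simpa only [hIcc, eventually_atTop] using
      eventually_setIntegral_pow_ne_zero_of_abs_unique_maximum (μ := volume) isCompact_Icc hf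
        hmax hfc hc'
  · simpa only [hIcc, smul_eq_mul, div_eq_inv_mul] using
      tendsto_setIntegral_pow_smul_of_abs_unique_maximum (μ := volume) isCompact_Icc hf hmax hfc
        hc' hg
end

section
/- Consider the OQRW on ℤ generated by B = [[1,0],[0,√p]] and C = [[0,0],[0,√q]], where p + q = 1 and p, q ∈ [0,1], with initial density matrix ρ₀ whose diagonal entries are a and b (so a + b = 1, a, b ≥ 0). Then for all n ≥ 0 and x ∈ ℤ, the distribution is p_x^{(n)} = a·δ_{x,-n} + b·Σ_{l=0}^{n} C(n,l) p^l q^{n-l} δ_{x,n-2l}, where δ is the Kronecker delta and C(n,l) the binomial coefficient. -/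
/-!
The Kraus operators `B = diag(1, √p)` and `C = diag(0, √q)` are diagonal, so conjugating by them
multiplies each diagonal entry of a state by the squared modulus of the corresponding entry of the
operator. Hence the two diagonal entries of the OQRW evolve independently, as classical walks on
`ℤ`: the `(0,0)` entry steps left with weight `1` and right with weight `0`, the `(1,1)` entry
steps left with weight `p` and right with weight `q`. After `n` steps such a walk is the binomial
distribution on `n - 2l`, which follows from Pascal's rule written on the antidiagonal
`l + r = n` (no truncated subtraction).
-/

open MeasureTheory Filter Matrix Finset
open scoped ComplexOrder

section BinomialWalk

variable {R : Type*} [CommSemiring R]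

/-- Mass at `x` after `n` steps of the walk on `ℤ` stepping by `-1` with weight `u` and by `+1`
with weight `v`; `lr` counts the left and right steps. -/
def binomialWalk (u v : R) (n : ℕ) (x : ℤ) : R :=
  ∑ lr ∈ antidiagonal n,
    (n.choose lr.1 : R) * u ^ lr.1 * v ^ lr.2 * if x = (lr.2 : ℤ) - lr.1 then 1 else 0

theorem binomialWalk_zero (u v : R) (x : ℤ) :
    binomialWalk u v 0 x = if x = 0 then 1 else 0 := by
  simp [binomialWalk]

theorem binomialWalk_succ (u v : R) (n : ℕ) (x : ℤ) :
    binomialWalk u v (n + 1) x =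
      u * binomialWalk u v n (x + 1) + v * binomialWalk u v n (x - 1) := by
  simp only [binomialWalk, mul_assoc, mul_sum]
  rw [sum_antidiagonal_choose_succ_mul
    (fun l r ↦ u ^ l * (v ^ r * if x = (r : ℤ) - l then (1 : R) else 0)), add_comm]
  congr 1 <;> refine sum_congr rfl fun lr hlr ↦ ?_
  · rw [Nat.choose_symm_of_eq_add (mem_antidiagonal.mp hlr).symm]
    have : (x = (lr.2 : ℤ) - ↑(lr.1 + 1)) ↔ (x + 1 = (lr.2 : ℤ) - lr.1) := by push_cast; omega
    simp only [this]
    ring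
  · have : (x = ↑(lr.2 + 1) - (lr.1 : ℤ)) ↔ (x - 1 = (lr.2 : ℤ) - lr.1) := by push_cast; omega
    simp only [this]
    ring

theorem binomialWalk_one_zero (n : ℕ) (x : ℤ) :
    binomialWalk (1 : R) 0 n x = if x = -(n : ℤ) then 1 else 0 := by
  induction n generalizing x with
  | zero => simp [binomialWalk_zero]
  | succ n ih =>
    rw [binomialWalk_succ, ih]
    simp only [one_mul, zero_mul, add_zero]
    congr 1
    push_cast
    exact propext (by omega)

theorem binomialWalk_eq_sum_range (u v : R) (n : ℕ) (x : ℤ) :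
    binomialWalk u v n x = ∑ l ∈ range (n + 1),
      (n.choose l : R) * u ^ l * v ^ (n - l) * if x = (n : ℤ) - 2 * l then 1 else 0 := by
  rw [binomialWalk, Nat.sum_antidiagonal_eq_sum_range_succ
    (fun l r ↦ (n.choose l : R) * u ^ l * v ^ r * if x = (r : ℤ) - l then 1 else 0)]
  refine sum_congr rfl fun l hl ↦ ?_
  have : ((n - l : ℕ) : ℤ) - l = n - 2 * l := by
    rw [Nat.cast_sub (by have := mem_range.mp hl; omega)]; ring
  rw [this]

end BinomialWalk

theorem diagonal_mul_mul_conjTranspose_diagonal_apply {m α : Type*} [Fintype m] [DecidableEq m]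
    [Semiring α] [StarRing α] (d e : m → α) (M : Matrix m m α) (i j : m) :
    (diagonal d * M * (diagonal e)ᴴ) i j = d i * M i j * star (e j) := by
  simp only [diagonal_conjTranspose, diagonal_mul, mul_diagonal, Pi.star_apply]

theorem oqrwState_diagonal_apply_self (β γ : Fin 2 → ℂ) (ρ₀ : Matrix (Fin 2) (Fin 2) ℂ)
    (n : ℕ) (x : ℤ) (i : Fin 2) :
    oqrwState (diagonal β) (diagonal γ) ρ₀ n x i i =
      ρ₀ i i * binomialWalk (β i * star (β i)) (γ i * star (γ i)) n x := by
  induction n generalizing x with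
  | zero =>
    rw [oqrwState, binomialWalk_zero]
    split_ifs <;> simp
  | succ n ih =>
    rw [oqrwState, Matrix.add_apply, diagonal_mul_mul_conjTranspose_diagonal_apply,
      diagonal_mul_mul_conjTranspose_diagonal_apply, ih, ih, binomialWalk_succ]
    ring

theorem ofReal_sqrt_mul_star {p : ℝ} (hp : 0 ≤ p) :
    (Real.sqrt p : ℂ) * star (Real.sqrt p : ℂ) = p := by
  rw [Complex.star_def, Complex.conj_ofReal, ← Complex.ofReal_mul, Real.mul_self_sqrt hp]

theorem oqrw_example1_distribution_general (p q a b : ℝ)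
    (hp : p ∈ Set.Icc (0:ℝ) 1) (hq : q ∈ Set.Icc (0:ℝ) 1)
    (ρ₀ : Matrix (Fin 2) (Fin 2) ℂ)
    (h00 : ρ₀ 0 0 = (a : ℂ)) (h11 : ρ₀ 1 1 = (b : ℂ))
    (n : ℕ) (x : ℤ) :
    (oqrwState !![(1 : ℂ), 0; 0, (Real.sqrt p : ℂ)]
        !![(0 : ℂ), 0; 0, (Real.sqrt q : ℂ)] ρ₀ n x).trace =
      (a : ℂ) * (if x = -(n : ℤ) then 1 else 0) +
        (b : ℂ) * ∑ l ∈ Finset.range (n + 1),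
          (n.choose l : ℂ) * (p : ℂ) ^ l * (q : ℂ) ^ (n - l) *
            (if x = (n : ℤ) - 2 * l then 1 else 0) := by
  rw [← diagonal_vec2, ← diagonal_vec2, trace_fin_two, oqrwState_diagonal_apply_self,
    oqrwState_diagonal_apply_self]
  simp only [Matrix.cons_val_zero, Matrix.cons_val_one, star_one, mul_one, star_zero, mul_zero,
    ofReal_sqrt_mul_star hp.1, ofReal_sqrt_mul_star hq.1, h00, h11]
  rw [binomialWalk_one_zero, binomialWalk_eq_sum_range]

/-- Example 1: the distribution of the OQRW generated by
`B = [[1,0],[0,√p]]`, `C = [[0,0],[0,√q]]` with `p+q=1`, started at a density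
matrix with diagonal entries `a, b`, is
`p_x^{(n)} = a δ_{x,-n} + b Σ_{l=0}^n C(n,l) p^l q^{n-l} δ_{x,n-2l}`. -/
theorem oqrw_example1_distribution (p q a b : ℝ)
    (hpq : p + q = 1) (hp : p ∈ Set.Icc (0:ℝ) 1) (hq : q ∈ Set.Icc (0:ℝ) 1)
    (ha : 0 ≤ a) (hb : 0 ≤ b) (hab : a + b = 1)
    (ρ₀ : Matrix (Fin 2) (Fin 2) ℂ) (hpos : ρ₀.PosSemidef)
    (h00 : ρ₀ 0 0 = (a : ℂ)) (h11 : ρ₀ 1 1 = (b : ℂ))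
    (n : ℕ) (x : ℤ) :
    (oqrwState !![(1 : ℂ), 0; 0, (Real.sqrt p : ℂ)]
        !![(0 : ℂ), 0; 0, (Real.sqrt q : ℂ)] ρ₀ n x).trace =
      (a : ℂ) * (if x = -(n : ℤ) then 1 else 0) +
        (b : ℂ) * ∑ l ∈ Finset.range (n + 1),
          (n.choose l : ℂ) * (p : ℂ) ^ l * (q : ℂ) ^ (n - l) *
            (if x = (n : ℤ) - 2 * l then 1 else 0) :=
  oqrw_example1_distribution_general p q a b hp hq ρ₀ h00 h11 n x
end

section
/- Consider the OQRW on ℤ generated by B = [[1,0],[0,√p]] and C = [[0,0],[0,√q]], where p + q = 1 and p ∈ (0,1), with initial density matrix ρ₀ whose diagonal entries are a and b (a + b = 1, a, b ≥ 0). Let μ_n be the probability measure on ℝ assigning mass p_x^{(n)} to the point x/n. Then μ_n converges weakly, as n → ∞, to the measure a·δ_{-1} + b·δ_{q-p} (a mixture of Dirac measures at −1 and q − p). -/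
open MeasureTheory Filter Matrix
open scoped ComplexOrder

/-- The distribution `p_x^{(n)} = Tr(ρ_x^{(n)})` of the OQRW. -/
noncomputable def oqrwProb (B C ρ₀ : Matrix (Fin 2) (Fin 2) ℂ) (n : ℕ) (x : ℤ) : ℝ :=
  ((oqrwState B C ρ₀ n x).trace).re

/-!
For diagonal `B = diag β`, `C = diag γ` the diagonal entries of `ρ_x^{(n)}` do not interact:
the `i`-th one evolves like the law of a classical walk with steps `-1` and `+1` of weights
`|β i|²` and `|γ i|²`. In the example the `0`-th entry is a walk that always steps left, so it
contributes `a δ_{-n}`, and the `1`-th entry is `b` times a binomial walk with weights `p, q`.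
Integrating `f(x/n)` against the latter is the Bernstein polynomial of `s ↦ f(2s - 1)` at `q`,
which converges to `f(2q - 1) = f(q - p)` by Bernstein's approximation theorem.
-/

open Finset

section BinomialWalk

variable {R : Type*} [CommSemiring R]

/-- For `p + q = 1`, the expectation of `g` at time `n` of the walk on `ℤ` stepping by `-1` with
probability `p` and by `+1` with probability `q`; `ij.1` counts the `+1` steps, `ij.2` the `-1`
steps. -/
noncomputable def binomialWalkSum (p q : R) (n : ℕ) (g : ℤ → R) : R :=
  ∑ ij ∈ antidiagonal n, (n.choose ij.1 : R) * (q ^ ij.1 * p ^ ij.2 * g (ij.1 - ij.2))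

lemma binomialWalkSum_zero (p q : R) (g : ℤ → R) : binomialWalkSum p q 0 g = g 0 := by
  simp [binomialWalkSum]

lemma binomialWalkSum_succ (p q : R) (n : ℕ) (g : ℤ → R) :
    binomialWalkSum p q (n + 1) g =
      p * binomialWalkSum p q n (fun x => g (x - 1)) +
        q * binomialWalkSum p q n (fun x => g (x + 1)) := by
  rw [binomialWalkSum, sum_antidiagonal_choose_succ_mul (fun i j => q ^ i * p ^ j * g (i - j)),
    binomialWalkSum, binomialWalkSum, mul_sum, mul_sum]
  congr 1
  · refine sum_congr rfl fun ij _ => ?_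
    rw [show ((ij.1 : ℤ) - ((ij.2 + 1 : ℕ) : ℤ)) = ij.1 - ij.2 - 1 by push_cast; ring]
    ring
  · refine sum_congr rfl fun ij hij => ?_
    rw [HasAntidiagonal.mem_antidiagonal] at hij
    rw [← hij, Nat.choose_symm_add, hij,
      show (((ij.1 + 1 : ℕ) : ℤ) - ij.2) = ij.1 - ij.2 + 1 by push_cast; ring]
    ring

lemma binomialWalkSum_one_zero (n : ℕ) (g : ℤ → R) :
    binomialWalkSum 1 0 n g = g (-n) := by
  rw [binomialWalkSum, sum_eq_single (0, n)]
  · simp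
  · rintro ⟨i, j⟩ hij hne
    have : i ≠ 0 := by rintro rfl; simp_all
    simp [this]
  · simp

lemma map_binomialWalkSum {S : Type*} [CommSemiring S] (φ : R →+* S) (p q : R) (n : ℕ)
    (g : ℤ → R) :
    φ (binomialWalkSum p q n g) = binomialWalkSum (φ p) (φ q) n (fun x => φ (g x)) := by
  simp [binomialWalkSum, map_sum]

end BinomialWalk

open unitInterval in
lemma binomialWalkSum_eq_bernsteinApproximation (F : C(I, ℝ)) (t : I) (n : ℕ) (g : ℤ → ℝ)
    (hg : ∀ k : Fin (n + 1), g (2 * k - n) = F (bernstein.z k)) :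
    binomialWalkSum (1 - t : ℝ) t n g = bernsteinApproximation n F t := by
  rw [bernsteinApproximation.apply, binomialWalkSum, Nat.sum_antidiagonal_eq_sum_range_succ_mk,
    ← Fin.sum_univ_eq_sum_range]
  refine sum_congr rfl fun k _ => ?_
  rw [bernstein_apply, smul_eq_mul, ← hg, Nat.cast_sub k.is_le]
  dsimp only
  rw [show ((k : ℕ) : ℤ) - ((n : ℤ) - (k : ℕ)) = 2 * k - n by ring]
  ring

open unitInterval in
lemma tendsto_binomialWalkSum_div {f : ℝ → ℝ} (hf : Continuous f) {t : ℝ} (ht₀ : 0 ≤ t)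
    (ht₁ : t ≤ 1) :
    Tendsto (fun n : ℕ => binomialWalkSum (1 - t) t n (fun x => f (x / n))) atTop
      (nhds (f (2 * t - 1))) := by
  let F : C(I, ℝ) := ⟨fun s => f (2 * s - 1), by fun_prop⟩
  let t' : I := ⟨t, ht₀, ht₁⟩
  have hF : ∀ n : ℕ, n ≠ 0 →
      binomialWalkSum (1 - t) t n (fun x => f (x / n)) = bernsteinApproximation n F t' := by
    intro n hn
    refine binomialWalkSum_eq_bernsteinApproximation F t' n _ fun k => ?_
    simp only [F, ContinuousMap.coe_mk, bernstein.z]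
    congr 1
    push_cast
    field_simp
  refine (((continuous_eval_const t').tendsto F).comp (bernsteinApproximation_uniform F)).congr' ?_
  filter_upwards [eventually_ne_atTop 0] with n hn
  exact (hF n hn).symm

lemma diagonal_mul_mul_diagonal_conjTranspose_apply {n α : Type*} [Fintype n] [DecidableEq n]
    [CommSemiring α] [StarRing α] (d : n → α) (M : Matrix n n α) (i j : n) :
    (diagonal d * M * (diagonal d)ᴴ) i j = d i * M i j * star (d j) := by
  rw [diagonal_conjTranspose, mul_diagonal, diagonal_mul, Pi.star_apply]

lemma hasSum_oqrwState_diagonal_apply (β γ : Fin 2 → ℂ) (ρ₀ : Matrix (Fin 2) (Fin 2) ℂ)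
    (i : Fin 2) (n : ℕ) (g : ℤ → ℂ) :
    HasSum (fun x => oqrwState (diagonal β) (diagonal γ) ρ₀ n x i i * g x)
      (ρ₀ i i * binomialWalkSum (β i * star (β i)) (γ i * star (γ i)) n g) := by
  induction n generalizing g with
  | zero =>
    rw [binomialWalkSum_zero]
    convert hasSum_ite_eq (0 : ℤ) (ρ₀ i i * g 0) using 2 with x
    split_ifs with hx <;> simp [oqrwState, hx]
  | succ n ih =>
    have hleft : HasSum (fun x => oqrwState (diagonal β) (diagonal γ) ρ₀ n (x + 1) i i * g x)
        (ρ₀ i i * binomialWalkSum (β i * star (β i)) (γ i * star (γ i)) n (fun x => g (x - 1))) := by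
      have h := (Equiv.addRight (1 : ℤ)).hasSum_iff.mpr (ih fun x => g (x - 1))
      simpa only [Function.comp_def, Equiv.coe_addRight, add_sub_cancel_right] using h
    have hright : HasSum (fun x => oqrwState (diagonal β) (diagonal γ) ρ₀ n (x - 1) i i * g x)
        (ρ₀ i i * binomialWalkSum (β i * star (β i)) (γ i * star (γ i)) n (fun x => g (x + 1))) := by
      have h := (Equiv.subRight (1 : ℤ)).hasSum_iff.mpr (ih fun x => g (x + 1))
      simpa only [Function.comp_def, Equiv.subRight_apply, sub_add_cancel] using h
    have hstep : ∀ x, oqrwState (diagonal β) (diagonal γ) ρ₀ (n + 1) x i i * g x =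
        β i * star (β i) * (oqrwState (diagonal β) (diagonal γ) ρ₀ n (x + 1) i i * g x) +
          γ i * star (γ i) * (oqrwState (diagonal β) (diagonal γ) ρ₀ n (x - 1) i i * g x) := by
      intro x
      rw [oqrwState, Matrix.add_apply, diagonal_mul_mul_diagonal_conjTranspose_apply,
        diagonal_mul_mul_diagonal_conjTranspose_apply]
      ring
    rw [funext hstep, binomialWalkSum_succ, mul_add, mul_left_comm _ (β i * _),
      mul_left_comm _ (γ i * _)]
    exact (hleft.mul_left _).add (hright.mul_left _)

lemma hasSum_oqrwProb_diagonal (β γ : Fin 2 → ℂ) (ρ₀ : Matrix (Fin 2) (Fin 2) ℂ) (n : ℕ)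
    (g : ℤ → ℝ) :
    HasSum (fun x => oqrwProb (diagonal β) (diagonal γ) ρ₀ n x * g x)
      (∑ i, ρ₀ i i * binomialWalkSum (β i * star (β i)) (γ i * star (γ i)) n
        (fun x => (g x : ℂ))).re := by
  have htrace : HasSum (fun x => (oqrwState (diagonal β) (diagonal γ) ρ₀ n x).trace * g x)
      (∑ i, ρ₀ i i * binomialWalkSum (β i * star (β i)) (γ i * star (γ i)) n
        (fun x => (g x : ℂ))) := by
    simp only [trace, Matrix.diag, sum_mul]
    exact hasSum_sum fun i _ => hasSum_oqrwState_diagonal_apply β γ ρ₀ i n _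
  simpa [oqrwProb, Complex.re_mul_ofReal] using Complex.hasSum_re htrace

theorem oqrw_example1_lln_general (p q a b : ℝ)
    (hpq : p + q = 1) (hp : 0 < p) (hp1 : p < 1)
    (ρ₀ : Matrix (Fin 2) (Fin 2) ℂ)
    (h00 : ρ₀ 0 0 = (a : ℂ)) (h11 : ρ₀ 1 1 = (b : ℂ)) :
    ∀ f : BoundedContinuousFunction ℝ ℝ,
      Tendsto (fun n : ℕ => ∑' x : ℤ,
          oqrwProb !![(1 : ℂ), 0; 0, (Real.sqrt p : ℂ)]
              !![(0 : ℂ), 0; 0, (Real.sqrt q : ℂ)] ρ₀ n x * f ((x : ℝ) / n))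
        atTop (nhds (a * f (-1) + b * f (q - p))) := by
  intro f
  have hsq : ∀ r : ℝ, 0 ≤ r → (r.sqrt : ℂ) * star (r.sqrt : ℂ) = r := fun r hr => by
    rw [Complex.star_def, Complex.conj_ofReal, ← Complex.ofReal_mul, Real.mul_self_sqrt hr]
  have hsum : ∀ n : ℕ, ∑' x : ℤ, oqrwProb !![(1 : ℂ), 0; 0, (p.sqrt : ℂ)]
        !![(0 : ℂ), 0; 0, (q.sqrt : ℂ)] ρ₀ n x * f ((x : ℝ) / n) =
      a * f (-n / n) + b * binomialWalkSum p q n (fun x => f (x / n)) := by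
    intro n
    rw [← diagonal_vec2, ← diagonal_vec2, (hasSum_oqrwProb_diagonal _ _ ρ₀ n _).tsum_eq,
      Fin.sum_univ_two]
    simp only [Matrix.cons_val_zero, Matrix.cons_val_one, star_one, star_zero, mul_one, mul_zero,
      hsq p hp.le, hsq q (by linarith), h00, h11, binomialWalkSum_one_zero]
    have hcast := map_binomialWalkSum Complex.ofRealHom p q n (fun x => f (x / n))
    simp only [Complex.ofRealHom_eq_coe] at hcast
    rw [← hcast, Int.cast_neg, Int.cast_natCast]
    norm_cast
  have hlim : Tendsto (fun n : ℕ => binomialWalkSum p q n (fun x => f (x / n))) atTop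
      (nhds (f (q - p))) := by
    have h := tendsto_binomialWalkSum_div f.continuous (t := q) (by linarith) (by linarith)
    rwa [show 1 - q = p by linarith, show 2 * q - 1 = q - p by linarith] at h
  refine (tendsto_const_nhds.add (hlim.const_mul b)).congr' ?_
  filter_upwards [eventually_ne_atTop 0] with n hn
  rw [hsum, neg_div, div_self (by exact_mod_cast hn)]

/-- Example 1, law of large numbers: for the OQRW generated by
`B = [[1,0],[0,√p]]`, `C = [[0,0],[0,√q]]` with `p ∈ (0,1)`, the measures
assigning mass `p_x^{(n)}` to `x/n` converge weakly to `a δ_{-1} + b δ_{q-p}`. -/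
theorem oqrw_example1_lln (p q a b : ℝ)
    (hpq : p + q = 1) (hp : 0 < p) (hp1 : p < 1)
    (ha : 0 ≤ a) (hb : 0 ≤ b) (hab : a + b = 1)
    (ρ₀ : Matrix (Fin 2) (Fin 2) ℂ) (hpos : ρ₀.PosSemidef)
    (h00 : ρ₀ 0 0 = (a : ℂ)) (h11 : ρ₀ 1 1 = (b : ℂ)) :
    ∀ f : BoundedContinuousFunction ℝ ℝ,
      Tendsto (fun n : ℕ => ∑' x : ℤ,
          oqrwProb !![(1 : ℂ), 0; 0, (Real.sqrt p : ℂ)]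
              !![(0 : ℂ), 0; 0, (Real.sqrt q : ℂ)] ρ₀ n x * f ((x : ℝ) / n))
        atTop (nhds (a * f (-1) + b * f (q - p))) :=
  oqrw_example1_lln_general p q a b hpq hp hp1 ρ₀ h00 h11
end

section
/- Let B = [[b₁₁,0],[b₂₁,0]] and C = [[0,c₁₂],[0,c₂₂]] be 2×2 complex matrices such that B + C is unitary, and suppose p = |b₁₁|² = 1 − |b₂₁|² = |c₂₂|² = 1 − |c₁₂|². Let P₁ = [[1,0],[0,0]], P₂ = [[0,0],[0,1]], and let Y_n(k) be the dual process of the OQRW generated by B and C. Then Y_n(k) = a₁^{(n)}(k) P₁ + a₂^{(n)}(k) P₂, where the column vector (a₁^{(n)}(k), a₂^{(n)}(k)) equals M(k)^n applied to (1,1), with M(k) = [[e^{ik} p, e^{ik}(1−p)], [e^{-ik}(1−p), e^{-ik} p]]. -/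
open MeasureTheory Filter Matrix

/-- The matrix `M(k) = [[e^{ik}p, e^{ik}(1-p)],[e^{-ik}(1-p), e^{-ik}p]]`. -/
noncomputable def exM (p : ℝ) (k : ℝ) : Matrix (Fin 2) (Fin 2) ℂ :=
  !![Complex.exp (Complex.I * k) * (p : ℂ), Complex.exp (Complex.I * k) * ((1 : ℂ) - p);
     Complex.exp (-(Complex.I * k)) * ((1 : ℂ) - p), Complex.exp (-(Complex.I * k)) * (p : ℂ)]

/-!
Both Kraus operators map diagonal matrices to diagonal matrices:
`Bᴴ diag(a, b) B = (|b₁₁|² a + |b₂₁|² b) P₁` and `Cᴴ diag(a, b) C = (|c₁₂|² a + |c₂₂|² b) P₂`.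
So the dual process stays diagonal, and one step of the recursion acts on the diagonal
entries as the matrix `M(k)`.
-/

namespace Matrix

theorem smul_add_smul_eq_diagonal (v : Fin 2 → ℂ) :
    v 0 • !![(1 : ℂ), 0; 0, 0] + v 1 • !![(0 : ℂ), 0; 0, 1] = diagonal v := by
  ext i j
  fin_cases i <;> fin_cases j <;> simp

theorem conjTranspose_mul_diagonal_mul_of_col_one_eq_zero (x y : ℂ) (v : Fin 2 → ℂ) :
    (!![x, 0; y, 0])ᴴ * diagonal v * !![x, 0; y, 0] =
      diagonal ![(‖x‖ : ℂ) ^ 2 * v 0 + (‖y‖ : ℂ) ^ 2 * v 1, 0] := by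
  ext i j
  fin_cases i <;> fin_cases j <;>
    simp [mul_apply, Fin.sum_univ_two, ← Complex.conj_mul']
  ring

theorem conjTranspose_mul_diagonal_mul_of_col_zero_eq_zero (x y : ℂ) (v : Fin 2 → ℂ) :
    (!![0, x; 0, y])ᴴ * diagonal v * !![0, x; 0, y] =
      diagonal ![0, (‖x‖ : ℂ) ^ 2 * v 0 + (‖y‖ : ℂ) ^ 2 * v 1] := by
  ext i j
  fin_cases i <;> fin_cases j <;>
    simp [mul_apply, Fin.sum_univ_two, ← Complex.conj_mul']
  ring

end Matrix

section Example2

variable {b11 b21 c12 c22 : ℂ} {p : ℝ}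

theorem oqrwDual_succ_of_diagonal (hb11 : ‖b11‖ ^ 2 = p) (hb21 : ‖b21‖ ^ 2 = 1 - p)
    (hc22 : ‖c22‖ ^ 2 = p) (hc12 : ‖c12‖ ^ 2 = 1 - p) {n : ℕ} {k : ℝ} {v : Fin 2 → ℂ}
    (hv : oqrwDual !![b11, 0; b21, 0] !![0, c12; 0, c22] n k = diagonal v) :
    oqrwDual !![b11, 0; b21, 0] !![0, c12; 0, c22] (n + 1) k = diagonal (exM p k *ᵥ v) := by
  have hsq {z : ℂ} {r : ℝ} (h : ‖z‖ ^ 2 = r) : (‖z‖ : ℂ) ^ 2 = r := by exact_mod_cast h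
  rw [oqrwDual, hv, conjTranspose_mul_diagonal_mul_of_col_one_eq_zero,
    conjTranspose_mul_diagonal_mul_of_col_zero_eq_zero, hsq hb11, hsq hb21, hsq hc22, hsq hc12]
  ext i j
  fin_cases i <;> fin_cases j <;>
    simp [exM, dotProduct, Fin.sum_univ_two] <;> ring

theorem oqrwDual_eq_diagonal (hb11 : ‖b11‖ ^ 2 = p) (hb21 : ‖b21‖ ^ 2 = 1 - p)
    (hc22 : ‖c22‖ ^ 2 = p) (hc12 : ‖c12‖ ^ 2 = 1 - p) (n : ℕ) (k : ℝ) :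
    oqrwDual !![b11, 0; b21, 0] !![0, c12; 0, c22] n k = diagonal (exM p k ^ n *ᵥ ![1, 1]) := by
  induction n with
  | zero =>
    rw [pow_zero, one_mulVec, oqrwDual]
    ext i j
    fin_cases i <;> fin_cases j <;> simp
  | succ n ih =>
    rw [oqrwDual_succ_of_diagonal hb11 hb21 hc22 hc12 ih, pow_succ', ← mulVec_mulVec]

end Example2

theorem oqrw_example2_dual_general (b11 b21 c12 c22 : ℂ) (p : ℝ)
    (hb11 : ‖b11‖ ^ 2 = p) (hb21 : ‖b21‖ ^ 2 = 1 - p)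
    (hc22 : ‖c22‖ ^ 2 = p) (hc12 : ‖c12‖ ^ 2 = 1 - p)
    (n : ℕ) (k : ℝ) :
    oqrwDual !![b11, 0; b21, 0] !![0, c12; 0, c22] n k =
      ((exM p k ^ n *ᵥ ![1, 1]) 0) • !![(1 : ℂ), 0; 0, 0] +
        ((exM p k ^ n *ᵥ ![1, 1]) 1) • !![(0 : ℂ), 0; 0, 1] := by
  rw [smul_add_smul_eq_diagonal, oqrwDual_eq_diagonal hb11 hb21 hc22 hc12]

/-- Example 2: for `B = [[b₁₁,0],[b₂₁,0]]`, `C = [[0,c₁₂],[0,c₂₂]]` with `B + C`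
unitary and `p = |b₁₁|² = 1-|b₂₁|² = |c₂₂|² = 1-|c₁₂|²`, the dual process is
`Y_n(k) = a₁^{(n)}(k) P₁ + a₂^{(n)}(k) P₂` where `(a₁^{(n)}, a₂^{(n)}) = M(k)^n (1,1)`. -/
theorem oqrw_example2_dual (b11 b21 c12 c22 : ℂ) (p : ℝ)
    (hU : !![b11, 0; b21, 0] + !![0, c12; 0, c22] ∈ unitary (Matrix (Fin 2) (Fin 2) ℂ))
    (hb11 : ‖b11‖ ^ 2 = p) (hb21 : ‖b21‖ ^ 2 = 1 - p)
    (hc22 : ‖c22‖ ^ 2 = p) (hc12 : ‖c12‖ ^ 2 = 1 - p)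
    (n : ℕ) (k : ℝ) :
    oqrwDual !![b11, 0; b21, 0] !![0, c12; 0, c22] n k =
      ((exM p k ^ n *ᵥ ![1, 1]) 0) • !![(1 : ℂ), 0; 0, 0] +
        ((exM p k ^ n *ᵥ ![1, 1]) 1) • !![(0 : ℂ), 0; 0, 1] :=
  oqrw_example2_dual_general b11 b21 c12 c22 p hb11 hb21 hc22 hc12 n k
end

section
/- Let B = [[b₁₁,0],[b₂₁,0]] and C = [[0,c₁₂],[0,c₂₂]] with B + C unitary and p = |b₁₁|² = 1 − |b₂₁|² = |c₂₂|² = 1 − |c₁₂|². With a₁^{(n)}(k), a₂^{(n)}(k) as in the dual-process decomposition Y_n(k) = a₁^{(n)}(k) P₁ + a₂^{(n)}(k) P₂ (where (a₁^{(n)},a₂^{(n)}) = M(k)^n (1,1), M(k) = [[e^{ik}p, e^{ik}(1−p)],[e^{-ik}(1−p), e^{-ik}p]]), define p_j^{(n)}(x) = (1/(2π)) ∫_{-π}^{π} e^{ikx} a_j^{(n)}(k) dk for j = 1,2. Then: (1) p₁^{(n+1)}(x) = p·p₁^{(n)}(x+1) + (1−p)·p₂^{(n)}(x+1) and p₂^{(n+1)}(x)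 = (1−p)·p₁^{(n)}(x−1) + p·p₂^{(n)}(x−1) for all n ≥ 0 and x ∈ ℤ; (2) if the OQRW has initial density matrix ρ₀ with diagonal entries a and b, then its distribution satisfies p_x^{(n)} = a·p₁^{(n)}(x) + b·p₂^{(n)}(x). -/
open MeasureTheory Filter Matrix
open scoped ComplexOrder

/-- The coefficients `a_j^{(n)}(k)`, `j = 1, 2`, given by `M(k)^n (1,1)`. -/
noncomputable def exA (p : ℝ) (j : Fin 2) (n : ℕ) (k : ℝ) : ℂ :=
  (exM p k ^ n *ᵥ ![1, 1]) j

/-- `p_j^{(n)}(x) = (1/(2π)) ∫_{-π}^{π} e^{ikx} a_j^{(n)}(k) dk`. -/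
noncomputable def exP (p : ℝ) (j : Fin 2) (n : ℕ) (x : ℤ) : ℂ :=
  (1 / (2 * (Real.pi : ℂ))) *
    ∫ k in (-Real.pi)..Real.pi, Complex.exp (Complex.I * k * x) * exA p j n k

/-!
Since `B` and `C` each have a single nonzero column, `B ρ B*` depends only on `ρ₁₁` and `C ρ C*`
only on `ρ₂₂`, so the diagonal of `ρ_x^{(n)}` performs a classical correlated walk with weights
`p` and `1 - p`. Let `G_ij^{(n)}(x)` be the inverse Fourier coefficients of the entries of `M(k)^n`
(`exPowCoeff`). The factorisation `M^{n+1} = M^n M` reproduces one step of that walk, because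
multiplying by `e^{±ik}` shifts Fourier coefficients by `±1`; hence
`(ρ_x^{(n)})_jj = Σ_i (ρ₀)_ii G_ij^{(n)}(x)`, and summing over `j` turns `G` into the
coefficients of the row sums `a_i^{(n)}(k)` of `M(k)^n`. The other factorisation
`M^{n+1} = M M^n` gives the recurrences for `p_j^{(n)}`.
-/

open Complex

noncomputable def invFourierCoeff (f : ℝ → ℂ) (x : ℤ) : ℂ :=
  (1 / (2 * (Real.pi : ℂ))) * ∫ k in (-Real.pi)..Real.pi, exp (I * k * x) * f k

theorem integral_exp_I_mul_int (x : ℤ) :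
    ∫ k in (-Real.pi)..Real.pi, exp (I * k * x) = if x = 0 then 2 * (Real.pi : ℂ) else 0 := by
  rcases eq_or_ne x 0 with rfl | hx
  · simp only [Int.cast_zero, mul_zero, exp_zero, intervalIntegral.integral_const, sub_neg_eq_add,
      real_smul, mul_one, if_true]
    push_cast
    ring
  · have hIx : I * x ≠ 0 := mul_ne_zero I_ne_zero (Int.cast_ne_zero.mpr hx)
    have hperiod : exp (I * x * Real.pi) = exp (I * x * ((-Real.pi : ℝ) : ℂ)) := by
      rw [show I * x * Real.pi = I * x * ((-Real.pi : ℝ) : ℂ) + x * (2 * Real.pi * I) by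
        push_cast; ring, exp_add, exp_int_mul_two_pi_mul_I, mul_one]
    simp_rw [fun k : ℝ => mul_right_comm I (k : ℂ) x, integral_exp_mul_complex hIx, hperiod,
      sub_self, zero_div, if_neg hx]

theorem invFourierCoeff_const (c : ℂ) (x : ℤ) :
    invFourierCoeff (fun _ => c) x = if x = 0 then c else 0 := by
  rw [invFourierCoeff, intervalIntegral.integral_mul_const, integral_exp_I_mul_int]
  have h2π : 2 * (Real.pi : ℂ) ≠ 0 := by simp [Real.pi_ne_zero]
  split_ifs
  · field_simp
  · simp

theorem invFourierCoeff_linear_comb {f g : ℝ → ℂ} (hf : IntervalIntegrable f volume (-Real.pi) Real.pi)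
    (hg : IntervalIntegrable g volume (-Real.pi) Real.pi) (c d : ℂ) (x : ℤ) :
    invFourierCoeff (fun k => c * f k + d * g k) x =
      c * invFourierCoeff f x + d * invFourierCoeff g x := by
  have hcont : Continuous fun k : ℝ => exp (I * k * x) := by fun_prop
  simp only [invFourierCoeff, mul_add, mul_left_comm _ c, mul_left_comm _ d]
  rw [intervalIntegral.integral_add
      ((hf.continuousOn_mul hcont.continuousOn).const_mul c)
      ((hg.continuousOn_mul hcont.continuousOn).const_mul d),
    intervalIntegral.integral_const_mul, intervalIntegral.integral_const_mul]
  ring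

theorem invFourierCoeff_exp_mul (f : ℝ → ℂ) (x : ℤ) :
    invFourierCoeff (fun k => exp (I * k) * f k) x = invFourierCoeff f (x + 1) := by
  simp only [invFourierCoeff, ← mul_assoc, ← exp_add]
  congr 3
  ext k
  push_cast
  ring_nf

theorem invFourierCoeff_exp_neg_mul (f : ℝ → ℂ) (x : ℤ) :
    invFourierCoeff (fun k => exp (-(I * k)) * f k) x = invFourierCoeff f (x - 1) := by
  simp only [invFourierCoeff, ← mul_assoc, ← exp_add]
  congr 3
  ext k
  push_cast
  ring_nf

theorem exP_eq_invFourierCoeff (p : ℝ) (j : Fin 2) (n : ℕ) (x : ℤ) :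
    exP p j n x = invFourierCoeff (fun k => exA p j n k) x :=
  rfl

@[fun_prop]
theorem continuous_exM_pow_apply (p : ℝ) (n : ℕ) (i j : Fin 2) :
    Continuous fun k : ℝ => (exM p k ^ n) i j := by
  have hM : Continuous (exM p) := by
    refine continuous_matrix fun i j => ?_
    fin_cases i <;> fin_cases j <;> simp only [exM] <;> fun_prop
  exact (hM.pow n).matrix_elem i j

theorem exA_eq_add (p : ℝ) (j : Fin 2) (n : ℕ) (k : ℝ) :
    exA p j n k = (exM p k ^ n) j 0 + (exM p k ^ n) j 1 := by
  simp [exA, mulVec, dotProduct, Fin.sum_univ_two]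

theorem continuous_exA (p : ℝ) (j : Fin 2) (n : ℕ) : Continuous (exA p j n) := by
  simp_rw [funext (exA_eq_add p j n)]
  fun_prop

theorem exA_succ_zero (p : ℝ) (n : ℕ) (k : ℝ) :
    exA p 0 (n + 1) k = exp (I * k) * (p * exA p 0 n k + (1 - p) * exA p 1 n k) := by
  simp only [exA, pow_succ', ← mulVec_mulVec]
  simp only [mulVec, dotProduct, exM, of_apply, cons_val', cons_val_fin_one, cons_val_zero,
    cons_val_one, Fin.sum_univ_two, mul_one]
  ring

theorem exA_succ_one (p : ℝ) (n : ℕ) (k : ℝ) :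
    exA p 1 (n + 1) k = exp (-(I * k)) * ((1 - p) * exA p 0 n k + p * exA p 1 n k) := by
  simp only [exA, pow_succ', ← mulVec_mulVec]
  simp only [mulVec, dotProduct, exM, of_apply, cons_val', cons_val_fin_one, cons_val_zero,
    cons_val_one, Fin.sum_univ_two, mul_one]
  ring

theorem exP_succ_zero (p : ℝ) (n : ℕ) (x : ℤ) :
    exP p 0 (n + 1) x = p * exP p 0 n (x + 1) + (1 - p) * exP p 1 n (x + 1) := by
  simp_rw [exP_eq_invFourierCoeff, exA_succ_zero, invFourierCoeff_exp_mul]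
  exact invFourierCoeff_linear_comb ((continuous_exA p 0 n).intervalIntegrable _ _)
    ((continuous_exA p 1 n).intervalIntegrable _ _) _ _ _

theorem exP_succ_one (p : ℝ) (n : ℕ) (x : ℤ) :
    exP p 1 (n + 1) x = (1 - p) * exP p 0 n (x - 1) + p * exP p 1 n (x - 1) := by
  simp_rw [exP_eq_invFourierCoeff, exA_succ_one, invFourierCoeff_exp_neg_mul]
  exact invFourierCoeff_linear_comb ((continuous_exA p 0 n).intervalIntegrable _ _)
    ((continuous_exA p 1 n).intervalIntegrable _ _) _ _ _

noncomputable def exPowCoeff (p : ℝ) (i j : Fin 2) (n : ℕ) : ℤ → ℂ :=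
  invFourierCoeff fun k => (exM p k ^ n) i j

theorem exP_eq_exPowCoeff_add (p : ℝ) (j : Fin 2) (n : ℕ) (x : ℤ) :
    exP p j n x = exPowCoeff p j 0 n x + exPowCoeff p j 1 n x := by
  simp_rw [exP_eq_invFourierCoeff, exA_eq_add]
  simpa [exPowCoeff] using invFourierCoeff_linear_comb
    ((continuous_exM_pow_apply p n j 0).intervalIntegrable _ _)
    ((continuous_exM_pow_apply p n j 1).intervalIntegrable _ _) 1 1 x

theorem exPowCoeff_zero (p : ℝ) (i j : Fin 2) (x : ℤ) :
    exPowCoeff p i j 0 x = if x = 0 then (1 : Matrix (Fin 2) (Fin 2) ℂ) i j else 0 := by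
  simp only [exPowCoeff, pow_zero]
  exact invFourierCoeff_const _ x

theorem exM_pow_succ_apply_zero (p : ℝ) (n : ℕ) (k : ℝ) (i : Fin 2) :
    (exM p k ^ (n + 1)) i 0 =
      p * (exp (I * k) * (exM p k ^ n) i 0) + (1 - p) * (exp (-(I * k)) * (exM p k ^ n) i 1) := by
  simp only [exM, pow_succ, mul_apply, of_apply, cons_val', cons_val_zero, cons_val_one,
    cons_val_fin_one, Fin.sum_univ_two]
  ring

theorem exM_pow_succ_apply_one (p : ℝ) (n : ℕ) (k : ℝ) (i : Fin 2) :
    (exM p k ^ (n + 1)) i 1 =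
      (1 - p) * (exp (I * k) * (exM p k ^ n) i 0) + p * (exp (-(I * k)) * (exM p k ^ n) i 1) := by
  simp only [exM, pow_succ, mul_apply, of_apply, cons_val', cons_val_zero, cons_val_one,
    cons_val_fin_one, Fin.sum_univ_two]
  ring

theorem exPowCoeff_succ_zero (p : ℝ) (n : ℕ) (i : Fin 2) (x : ℤ) :
    exPowCoeff p i 0 (n + 1) x =
      p * exPowCoeff p i 0 n (x + 1) + (1 - p) * exPowCoeff p i 1 n (x - 1) := by
  simp_rw [exPowCoeff, exM_pow_succ_apply_zero]
  rw [invFourierCoeff_linear_comb (Continuous.intervalIntegrable (by fun_prop) _ _)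
      (Continuous.intervalIntegrable (by fun_prop) _ _),
    invFourierCoeff_exp_mul, invFourierCoeff_exp_neg_mul]

theorem exPowCoeff_succ_one (p : ℝ) (n : ℕ) (i : Fin 2) (x : ℤ) :
    exPowCoeff p i 1 (n + 1) x =
      (1 - p) * exPowCoeff p i 0 n (x + 1) + p * exPowCoeff p i 1 n (x - 1) := by
  simp_rw [exPowCoeff, exM_pow_succ_apply_one]
  rw [invFourierCoeff_linear_comb (Continuous.intervalIntegrable (by fun_prop) _ _)
      (Continuous.intervalIntegrable (by fun_prop) _ _),
    invFourierCoeff_exp_mul, invFourierCoeff_exp_neg_mul]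

section oqrwState

variable (b11 b21 c12 c22 : ℂ) (ρ₀ : Matrix (Fin 2) (Fin 2) ℂ)

theorem oqrwState_succ_apply_zero_zero (n : ℕ) (x : ℤ) :
    oqrwState !![b11, 0; b21, 0] !![0, c12; 0, c22] ρ₀ (n + 1) x 0 0 =
      (‖b11‖ ^ 2 : ℝ) * oqrwState !![b11, 0; b21, 0] !![0, c12; 0, c22] ρ₀ n (x + 1) 0 0 +
      (‖c12‖ ^ 2 : ℝ) * oqrwState !![b11, 0; b21, 0] !![0, c12; 0, c22] ρ₀ n (x - 1) 1 1 := by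
  rw [oqrwState]
  simp only [Matrix.add_apply, mul_apply, Fin.sum_univ_two, conjTranspose_apply]
  simp only [of_apply, cons_val', cons_val_zero, cons_val_one, cons_val_fin_one, star_zero,
    RCLike.star_def, zero_mul, mul_zero, add_zero, zero_add, ofReal_pow, ← mul_conj']
  ring

theorem oqrwState_succ_apply_one_one (n : ℕ) (x : ℤ) :
    oqrwState !![b11, 0; b21, 0] !![0, c12; 0, c22] ρ₀ (n + 1) x 1 1 =
      (‖b21‖ ^ 2 : ℝ) * oqrwState !![b11, 0; b21, 0] !![0, c12; 0, c22] ρ₀ n (x + 1) 0 0 +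
      (‖c22‖ ^ 2 : ℝ) * oqrwState !![b11, 0; b21, 0] !![0, c12; 0, c22] ρ₀ n (x - 1) 1 1 := by
  rw [oqrwState]
  simp only [Matrix.add_apply, mul_apply, Fin.sum_univ_two, conjTranspose_apply]
  simp only [of_apply, cons_val', cons_val_zero, cons_val_one, cons_val_fin_one, star_zero,
    RCLike.star_def, zero_mul, mul_zero, add_zero, zero_add, ofReal_pow, ← mul_conj']
  ring

variable {b11 b21 c12 c22} {p : ℝ} (hb11 : ‖b11‖ ^ 2 = p) (hb21 : ‖b21‖ ^ 2 = 1 - p)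
  (hc22 : ‖c22‖ ^ 2 = p) (hc12 : ‖c12‖ ^ 2 = 1 - p)
include hb11 hb21 hc22 hc12

theorem oqrwState_apply_diag (n : ℕ) (x : ℤ) (j : Fin 2) :
    oqrwState !![b11, 0; b21, 0] !![0, c12; 0, c22] ρ₀ n x j j =
      ρ₀ 0 0 * exPowCoeff p 0 j n x + ρ₀ 1 1 * exPowCoeff p 1 j n x := by
  induction n generalizing x j with
  | zero => by_cases hx : x = 0 <;> fin_cases j <;> simp [oqrwState, exPowCoeff_zero, hx]
  | succ n ih =>
    match j with
    | 0 =>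
      rw [oqrwState_succ_apply_zero_zero, ih, ih, hb11, hc12, exPowCoeff_succ_zero,
        exPowCoeff_succ_zero]
      push_cast
      ring
    | 1 =>
      rw [oqrwState_succ_apply_one_one, ih, ih, hb21, hc22, exPowCoeff_succ_one,
        exPowCoeff_succ_one]
      push_cast
      ring

theorem trace_oqrwState (n : ℕ) (x : ℤ) :
    (oqrwState !![b11, 0; b21, 0] !![0, c12; 0, c22] ρ₀ n x).trace =
      ρ₀ 0 0 * exP p 0 n x + ρ₀ 1 1 * exP p 1 n x := by
  rw [trace_fin_two, oqrwState_apply_diag ρ₀ hb11 hb21 hc22 hc12,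
    oqrwState_apply_diag ρ₀ hb11 hb21 hc22 hc12, exP_eq_exPowCoeff_add, exP_eq_exPowCoeff_add]
  ring

end oqrwState

theorem oqrw_example2_correlated_general (b11 b21 c12 c22 : ℂ) (p : ℝ)
    (hb11 : ‖b11‖ ^ 2 = p) (hb21 : ‖b21‖ ^ 2 = 1 - p)
    (hc22 : ‖c22‖ ^ 2 = p) (hc12 : ‖c12‖ ^ 2 = 1 - p)
    (a b : ℝ) (ρ₀ : Matrix (Fin 2) (Fin 2) ℂ)
    (h00 : ρ₀ 0 0 = (a : ℂ)) (h11 : ρ₀ 1 1 = (b : ℂ)) :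
    (∀ (n : ℕ) (x : ℤ),
        exP p 0 (n + 1) x = (p : ℂ) * exP p 0 n (x + 1) + ((1 : ℂ) - p) * exP p 1 n (x + 1) ∧
        exP p 1 (n + 1) x = ((1 : ℂ) - p) * exP p 0 n (x - 1) + (p : ℂ) * exP p 1 n (x - 1)) ∧
      ∀ (n : ℕ) (x : ℤ),
        (oqrwState !![b11, 0; b21, 0] !![0, c12; 0, c22] ρ₀ n x).trace =
          (a : ℂ) * exP p 0 n x + (b : ℂ) * exP p 1 n x := by
  refine ⟨fun n x => ⟨exP_succ_zero p n x, exP_succ_one p n x⟩, fun n x => ?_⟩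
  rw [trace_oqrwState ρ₀ hb11 hb21 hc22 hc12, h00, h11]

/-- Example 2: the OQRW generated by `B = [[b₁₁,0],[b₂₁,0]]`, `C = [[0,c₁₂],[0,c₂₂]]`
(with `B+C` unitary, `p = |b₁₁|² = 1-|b₂₁|² = |c₂₂|² = 1-|c₁₂|²`) is a correlated
random walk: the `p_j^{(n)}` satisfy the correlated random walk recurrences, and
`p_x^{(n)} = a p₁^{(n)}(x) + b p₂^{(n)}(x)` for an initial density matrix with
diagonal entries `a, b`. -/
theorem oqrw_example2_correlated (b11 b21 c12 c22 : ℂ) (p : ℝ)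
    (hU : !![b11, 0; b21, 0] + !![0, c12; 0, c22] ∈ unitary (Matrix (Fin 2) (Fin 2) ℂ))
    (hb11 : ‖b11‖ ^ 2 = p) (hb21 : ‖b21‖ ^ 2 = 1 - p)
    (hc22 : ‖c22‖ ^ 2 = p) (hc12 : ‖c12‖ ^ 2 = 1 - p)
    (a b : ℝ) (ha : 0 ≤ a) (hb : 0 ≤ b) (hab : a + b = 1)
    (ρ₀ : Matrix (Fin 2) (Fin 2) ℂ) (hpos : ρ₀.PosSemidef)
    (h00 : ρ₀ 0 0 = (a : ℂ)) (h11 : ρ₀ 1 1 = (b : ℂ)) :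
    (∀ (n : ℕ) (x : ℤ),
        exP p 0 (n + 1) x = (p : ℂ) * exP p 0 n (x + 1) + ((1 : ℂ) - p) * exP p 1 n (x + 1) ∧
        exP p 1 (n + 1) x = ((1 : ℂ) - p) * exP p 0 n (x - 1) + (p : ℂ) * exP p 1 n (x - 1)) ∧
      ∀ (n : ℕ) (x : ℤ),
        (oqrwState !![b11, 0; b21, 0] !![0, c12; 0, c22] ρ₀ n x).trace =
          (a : ℂ) * exP p 0 n x + (b : ℂ) * exP p 1 n x :=
  oqrw_example2_correlated_general b11 b21 c12 c22 p hb11 hb21 hc22 hc12 a b ρ₀ h00 h11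
end

section
/- Let p + q = 1 with p, q ∈ (0,1) and let 0 < γ ≤ min{√(2p), √(2q)}. Consider the OQRW on ℤ generated by B = [[1,0],[0,√(p−γ²/2)]] and C = [[0,γ],[0,√(q−γ²/2)]], with initial density matrix ρ₀ = [[a,0],[0,b]] (a + b = 1, a, b ≥ 0). Let μ_n be the probability measure on ℝ assigning mass p_x^{(n)} to x/n. Then μ_n converges weakly, as n → ∞, to the Dirac measure δ_{−1}. -/
open MeasureTheory Filter Matrix
open scoped ComplexOrder

/-!
The trace `p_x^{(n)}` only sees the diagonal of `ρ_x^{(n)}`, and for these `B`, `C` the diagonal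
evolves as a classical two-state walk: the upper state always steps left; the lower state steps
left with weight `s = p - γ²/2`, right with weight `t = q - γ²/2`, and jumps to the upper state
while stepping right with weight `γ²`. So the lower mass decays like `(1 - γ²)ⁿ`, and
the first moment of `x + n` grows by `2 (γ² + t) (1 - γ²)ⁿ b` per step, hence stays
bounded. The mean distance of `x / n` from `-1` is this moment divided by `n`, which tends
to `0`; for a bounded continuous `f`, that controls `∑ p_x^{(n)} f (x / n) - f (-1)`.
-/

open Topology

theorem tendsto_tsum_mul_of_tendsto_tsum_mul_dist {α ι X : Type*} [PseudoMetricSpace X]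
    {l : Filter α} {w : α → ι → ℝ} {z : α → ι → X} {c : X}
    (hw : ∀ n i, 0 ≤ w n i) (hw₁ : ∀ n, HasSum (w n) 1)
    (hdist : ∀ n, Summable fun i => w n i * dist (z n i) c)
    (hlim : Tendsto (fun n => ∑' i, w n i * dist (z n i) c) l (𝓝 0))
    (f : BoundedContinuousFunction X ℝ) :
    Tendsto (fun n => ∑' i, w n i * f (z n i)) l (𝓝 (f c)) := by
  rw [Metric.tendsto_nhds]
  intro ε hε
  obtain ⟨δ, hδ, hfδ⟩ :=
    Metric.continuousAt_iff.1 f.continuous.continuousAt (ε / 2) (half_pos hε)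
  set K := 2 * ‖f‖ / δ
  have hpt : ∀ y, dist (f y) (f c) ≤ ε / 2 + K * dist y c := by
    intro y
    have hK : 0 ≤ K * dist y c := by positivity
    by_cases hy : dist y c < δ
    · linarith [hfδ hy]
    · have : 2 * ‖f‖ ≤ K * dist y c := by
        rw [div_mul_eq_mul_div, le_div_iff₀ hδ]
        exact mul_le_mul_of_nonneg_left (not_lt.1 hy) (by positivity)
      linarith [f.dist_le_two_norm y c]
  have hsmall : ∀ᶠ n in l, K * ∑' i, w n i * dist (z n i) c < ε / 2 := by
    have := hlim.const_mul K
    rw [mul_zero] at this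
    exact this.eventually (gt_mem_nhds (half_pos hε))
  filter_upwards [hsmall] with n hn
  have hsum : Summable fun i => w n i * f (z n i) :=
    .of_norm_bounded ((hw₁ n).summable.mul_right ‖f‖) fun i => by
      rw [norm_mul, Real.norm_of_nonneg (hw n i)]
      exact mul_le_mul_of_nonneg_left (f.norm_coe_le_norm _) (hw n i)
  have hbound : HasSum (fun i => ε / 2 * w n i + K * (w n i * dist (z n i) c))
      (ε / 2 * 1 + K * ∑' i, w n i * dist (z n i) c) :=
    ((hw₁ n).mul_left _).add ((hdist n).hasSum.mul_left K)
  have hdiff : ∑' i, w n i * f (z n i) - f c = ∑' i, w n i * (f (z n i) - f c) := by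
    simp only [mul_sub]
    rw [hsum.tsum_sub ((hw₁ n).summable.mul_right _), tsum_mul_right, (hw₁ n).tsum_eq, one_mul]
  calc dist (∑' i, w n i * f (z n i)) (f c) = ‖∑' i, w n i * (f (z n i) - f c)‖ := by
        rw [dist_eq_norm, hdiff]
    _ ≤ ε / 2 * 1 + K * ∑' i, w n i * dist (z n i) c := by
        refine tsum_of_norm_bounded hbound fun i => ?_
        rw [norm_mul, Real.norm_of_nonneg (hw n i), ← dist_eq_norm, mul_comm (ε / 2),
          mul_left_comm, ← mul_add]
        exact mul_le_mul_of_nonneg_left (hpt _) (hw n i)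
    _ < ε := by linarith

-- `upperEntry` and `lowerEntry` are the diagonal entries of `ρ_x^{(n)}` for
-- `B = diag(1, √s)`, `C = [[0, √g], [0, √t]]` and `ρ₀ = diag(a, b)`.
noncomputable def lowerEntry (s t b : ℝ) : ℕ → ℤ → ℝ
  | 0, x => if x = 0 then b else 0
  | n + 1, x => s * lowerEntry s t b n (x + 1) + t * lowerEntry s t b n (x - 1)

noncomputable def upperEntry (g s t a b : ℝ) : ℕ → ℤ → ℝ
  | 0, x => if x = 0 then a else 0
  | n + 1, x => upperEntry g s t a b n (x + 1) + g * lowerEntry s t b n (x - 1)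

lemma hasSum_mul_comp_add {φ F : ℤ → ℝ} {σ : ℝ} (c : ℤ)
    (h : HasSum (fun x => φ (x - c) * F x) σ) : HasSum (fun x => φ x * F (x + c)) σ := by
  simpa [Function.comp_def] using (Equiv.addRight c).hasSum_iff.2 h

section DiagonalWalk

variable {g s t a b : ℝ}

lemma lowerEntry_eq_zero_of_notMem {n : ℕ} {x : ℤ} (hx : x ∉ Finset.Icc (-n : ℤ) n) :
    lowerEntry s t b n x = 0 := by
  induction n generalizing x with
  | zero => simp_all [lowerEntry]
  | succ n ih =>
    simp only [Finset.mem_Icc, not_and_or, not_le] at hx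
    rw [lowerEntry, ih, ih, mul_zero, mul_zero, add_zero] <;>
      simp only [Finset.mem_Icc, not_and_or, not_le] <;> omega

lemma upperEntry_eq_zero_of_notMem {n : ℕ} {x : ℤ} (hx : x ∉ Finset.Icc (-n : ℤ) n) :
    upperEntry g s t a b n x = 0 := by
  induction n generalizing x with
  | zero => simp_all [upperEntry]
  | succ n ih =>
    simp only [Finset.mem_Icc, not_and_or, not_le] at hx
    rw [upperEntry, ih, lowerEntry_eq_zero_of_notMem, mul_zero, add_zero] <;>
      simp only [Finset.mem_Icc, not_and_or, not_le] <;> omega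

lemma lowerEntry_nonneg (hs : 0 ≤ s) (ht : 0 ≤ t) (hb : 0 ≤ b) (n : ℕ) (x : ℤ) :
    0 ≤ lowerEntry s t b n x := by
  induction n generalizing x with
  | zero => unfold lowerEntry; split_ifs <;> simp [hb]
  | succ n ih => unfold lowerEntry; have := ih (x + 1); have := ih (x - 1); positivity

lemma upperEntry_nonneg (hg : 0 ≤ g) (hs : 0 ≤ s) (ht : 0 ≤ t) (ha : 0 ≤ a) (hb : 0 ≤ b)
    (n : ℕ) (x : ℤ) : 0 ≤ upperEntry g s t a b n x := by
  induction n generalizing x with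
  | zero => unfold upperEntry; split_ifs <;> simp [ha]
  | succ n ih =>
    unfold upperEntry
    have := lowerEntry_nonneg hs ht hb n (x - 1)
    have := ih (x + 1)
    positivity

lemma summable_mul_lowerEntry (φ : ℤ → ℝ) (n : ℕ) :
    Summable fun x => φ x * lowerEntry s t b n x :=
  summable_of_ne_finset_zero (s := Finset.Icc (-n : ℤ) n) fun _ hx => by
    rw [lowerEntry_eq_zero_of_notMem hx, mul_zero]

lemma summable_mul_upperEntry (φ : ℤ → ℝ) (n : ℕ) :
    Summable fun x => φ x * upperEntry g s t a b n x :=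
  summable_of_ne_finset_zero (s := Finset.Icc (-n : ℤ) n) fun _ hx => by
    rw [upperEntry_eq_zero_of_notMem hx, mul_zero]

lemma tsum_mul_lowerEntry_succ (φ : ℤ → ℝ) (n : ℕ) :
    ∑' x, φ x * lowerEntry s t b (n + 1) x =
      s * ∑' x, φ (x - 1) * lowerEntry s t b n x +
        t * ∑' x, φ (x + 1) * lowerEntry s t b n x := by
  have hleft := hasSum_mul_comp_add 1
    (summable_mul_lowerEntry (s := s) (t := t) (b := b) (φ <| · - 1) n).hasSum
  have hright := hasSum_mul_comp_add (-1)
    (summable_mul_lowerEntry (s := s) (t := t) (b := b) (φ <| · + 1) n).hasSum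
  simp only [← sub_eq_add_neg] at hright
  rw [← ((hleft.mul_left s).add (hright.mul_left t)).tsum_eq]
  exact tsum_congr fun x => by rw [lowerEntry]; ring

lemma tsum_mul_upperEntry_succ (φ : ℤ → ℝ) (n : ℕ) :
    ∑' x, φ x * upperEntry g s t a b (n + 1) x =
      ∑' x, φ (x - 1) * upperEntry g s t a b n x +
        g * ∑' x, φ (x + 1) * lowerEntry s t b n x := by
  have hleft := hasSum_mul_comp_add 1
    (summable_mul_upperEntry (g := g) (s := s) (t := t) (a := a) (b := b) (φ <| · - 1) n).hasSum
  have hright := hasSum_mul_comp_add (-1)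
    (summable_mul_lowerEntry (s := s) (t := t) (b := b) (φ <| · + 1) n).hasSum
  simp only [← sub_eq_add_neg] at hright
  rw [← (hleft.add (hright.mul_left g)).tsum_eq]
  exact tsum_congr fun x => by rw [upperEntry]; ring

lemma tsum_lowerEntry (n : ℕ) : ∑' x, lowerEntry s t b n x = (s + t) ^ n * b := by
  induction n with
  | zero => simp [lowerEntry]
  | succ n ih =>
    have := tsum_mul_lowerEntry_succ (s := s) (t := t) (b := b) (fun _ => 1) n
    simp only [one_mul] at this
    rw [this, ih]; ring

lemma tsum_upperEntry_add_tsum_lowerEntry (h : g + s + t = 1) (n : ℕ) :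
    ∑' x, upperEntry g s t a b n x + ∑' x, lowerEntry s t b n x = a + b := by
  induction n with
  | zero => simp [upperEntry, lowerEntry]
  | succ n ih =>
    have hU := tsum_mul_upperEntry_succ (g := g) (s := s) (t := t) (a := a) (b := b) (fun _ => 1) n
    have hL := tsum_mul_lowerEntry_succ (s := s) (t := t) (b := b) (fun _ => 1) n
    simp only [one_mul] at hU hL
    rw [hU, hL, ← ih]
    linear_combination (∑' x, lowerEntry s t b n x) * h

lemma tsum_add_mul_lowerEntry (φ : ℤ → ℝ) (c : ℝ) (n : ℕ) :
    ∑' x, (φ x + c) * lowerEntry s t b n x =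
      ∑' x, φ x * lowerEntry s t b n x + c * ∑' x, lowerEntry s t b n x := by
  have hc := summable_mul_lowerEntry (s := s) (t := t) (b := b) (fun _ => c) n
  simp only [add_mul]
  rw [(summable_mul_lowerEntry φ n).tsum_add hc, tsum_mul_left]

lemma tsum_moment_upperEntry_add_lowerEntry (h : g + s + t = 1) (n : ℕ) :
    ∑' x : ℤ, ((x : ℝ) + n) * upperEntry g s t a b n x +
        ∑' x : ℤ, ((x : ℝ) + n) * lowerEntry s t b n x =
      2 * (g + t) * b * ∑ m ∈ Finset.range n, (s + t) ^ m := by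
  induction n with
  | zero => simp [upperEntry, lowerEntry]
  | succ n ih =>
    have hU := tsum_mul_upperEntry_succ (g := g) (s := s) (t := t) (a := a) (b := b)
      (fun x => (x : ℝ) + (n + 1 : ℕ)) n
    have hL := tsum_mul_lowerEntry_succ (s := s) (t := t) (b := b)
      (fun x => (x : ℝ) + (n + 1 : ℕ)) n
    have hleft (ψ : ℤ → ℝ) : ∑' x : ℤ, (((x - 1 : ℤ) : ℝ) + (n + 1 : ℕ)) * ψ x =
        ∑' x : ℤ, ((x : ℝ) + n) * ψ x :=
      tsum_congr fun x => by push_cast; ring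
    have hright (ψ : ℤ → ℝ) : ∑' x : ℤ, (((x + 1 : ℤ) : ℝ) + (n + 1 : ℕ)) * ψ x =
        ∑' x : ℤ, (((x : ℝ) + n) + 2) * ψ x :=
      tsum_congr fun x => by push_cast; ring
    rw [hU, hL, hleft, hleft, hright, tsum_add_mul_lowerEntry, tsum_lowerEntry,
      Finset.sum_range_succ]
    linear_combination ih + (∑' x : ℤ, ((x : ℝ) + n) * lowerEntry s t b n x) * h

lemma summable_upperEntry_add_lowerEntry_mul (ψ : ℤ → ℝ) (n : ℕ) :
    Summable fun x => (upperEntry g s t a b n x + lowerEntry s t b n x) * ψ x :=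
  summable_of_ne_finset_zero (s := Finset.Icc (-n : ℤ) n) fun _ hx => by
    rw [upperEntry_eq_zero_of_notMem hx, lowerEntry_eq_zero_of_notMem hx, add_zero, zero_mul]

lemma hasSum_upperEntry_add_lowerEntry (h : g + s + t = 1) (n : ℕ) :
    HasSum (fun x => upperEntry g s t a b n x + lowerEntry s t b n x) (a + b) := by
  have hU := summable_mul_upperEntry (g := g) (s := s) (t := t) (a := a) (b := b) (fun _ => 1) n
  have hL := summable_mul_lowerEntry (s := s) (t := t) (b := b) (fun _ => 1) n
  simp only [one_mul] at hU hL
  rw [← tsum_upperEntry_add_tsum_lowerEntry h n, ← hU.tsum_add hL]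
  exact (hU.add hL).hasSum

lemma tsum_mul_dist_neg_one_eq {n : ℕ} (hn : n ≠ 0) :
    ∑' x : ℤ, (upperEntry g s t a b n x + lowerEntry s t b n x) * dist ((x : ℝ) / n) (-1) =
      (∑' x : ℤ, ((x : ℝ) + n) * upperEntry g s t a b n x +
        ∑' x : ℤ, ((x : ℝ) + n) * lowerEntry s t b n x) / n := by
  rw [← (summable_mul_upperEntry _ n).tsum_add (summable_mul_lowerEntry _ n), ← tsum_div_const]
  refine tsum_congr fun x => ?_
  by_cases hx : x < -n
  · have hx' : x ∉ Finset.Icc (-n : ℤ) n := by simp only [Finset.mem_Icc]; omega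
    simp [upperEntry_eq_zero_of_notMem hx', lowerEntry_eq_zero_of_notMem hx']
  · have hxn : (0 : ℝ) ≤ x + n := by exact_mod_cast (by omega : (0 : ℤ) ≤ x + n)
    have hn' : (0 : ℝ) < n := by positivity
    rw [Real.dist_eq, sub_neg_eq_add, div_add_one hn'.ne', abs_of_nonneg (by positivity)]
    ring

lemma tendsto_tsum_mul_dist_neg_one (hg : 0 < g) (hs : 0 ≤ s) (ht : 0 ≤ t) (hb : 0 ≤ b)
    (h : g + s + t = 1) :
    Tendsto (fun n : ℕ => ∑' x : ℤ,
        (upperEntry g s t a b n x + lowerEntry s t b n x) * dist ((x : ℝ) / n) (-1))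
      atTop (𝓝 0) := by
  have hformula : ∀ᶠ n : ℕ in atTop,
      2 * (g + t) * b * (∑ m ∈ Finset.range n, (s + t) ^ m) / n =
        ∑' x : ℤ,
          (upperEntry g s t a b n x + lowerEntry s t b n x) * dist ((x : ℝ) / n) (-1) := by
    filter_upwards [eventually_ne_atTop 0] with n hn
    rw [tsum_mul_dist_neg_one_eq hn, tsum_moment_upperEntry_add_lowerEntry h]
  refine Tendsto.congr' hformula (squeeze_zero (fun n => by positivity) (fun n => ?_)
    (tendsto_const_div_atTop_nhds_zero_nat (2 * (g + t) * b / g)))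
  have hgeom : ∑ m ∈ Finset.range n, (s + t) ^ m ≤ 1 / g := by
    have := geom_sum_Ico_le_of_lt_one (x := s + t) (m := 0) (n := n) (by positivity) (by linarith)
    rwa [← Finset.range_eq_Ico, pow_zero, show 1 - (s + t) = g by linarith] at this
  rw [div_eq_mul_one_div (2 * (g + t) * b) g]
  gcongr

end DiagonalWalk

lemma oqrwState_diag (s g t a b : ℝ) (n : ℕ) (x : ℤ) :
    oqrwState !![1, 0; 0, (s : ℂ)] !![0, (g : ℂ); 0, (t : ℂ)] !![(a : ℂ), 0; 0, (b : ℂ)]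
        n x 0 0 = upperEntry (g ^ 2) (s ^ 2) (t ^ 2) a b n x ∧
      oqrwState !![1, 0; 0, (s : ℂ)] !![0, (g : ℂ); 0, (t : ℂ)] !![(a : ℂ), 0; 0, (b : ℂ)]
        n x 1 1 = lowerEntry (s ^ 2) (t ^ 2) b n x := by
  induction n generalizing x with
  | zero => by_cases hx : x = 0 <;> simp [oqrwState, upperEntry, lowerEntry, hx]
  | succ n ih =>
    rw [oqrwState, upperEntry, lowerEntry]
    simp only [Matrix.add_apply, Matrix.mul_apply, Fin.sum_univ_two, conjTranspose_apply,
      of_apply, cons_val', cons_val_zero, cons_val_one, cons_val_fin_one, RCLike.star_def,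
      Complex.conj_ofReal, _root_.map_one, _root_.map_zero, one_mul, mul_one, zero_mul, mul_zero,
      add_zero, zero_add, (ih (x + 1)).1, (ih (x + 1)).2, (ih (x - 1)).2]
    push_cast
    constructor <;> ring

lemma oqrwProb_eq (s g t a b : ℝ) (n : ℕ) (x : ℤ) :
    oqrwProb !![1, 0; 0, (s : ℂ)] !![0, (g : ℂ); 0, (t : ℂ)] !![(a : ℂ), 0; 0, (b : ℂ)]
        n x =
      upperEntry (g ^ 2) (s ^ 2) (t ^ 2) a b n x + lowerEntry (s ^ 2) (t ^ 2) b n x := by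
  obtain ⟨hupper, hlower⟩ := oqrwState_diag s g t a b n x
  rw [oqrwProb, trace_fin_two, hupper, hlower]
  simp

theorem oqrw_example3_lln_general (p q γ a b : ℝ)
    (hpq : p + q = 1)
    (hγ : 0 < γ) (hγ' : γ ≤ min (Real.sqrt (2 * p)) (Real.sqrt (2 * q)))
    (ha : 0 ≤ a) (hb : 0 ≤ b) (hab : a + b = 1) :
    ∀ f : BoundedContinuousFunction ℝ ℝ,
      Tendsto (fun n : ℕ => ∑' x : ℤ,
          oqrwProb !![(1 : ℂ), 0; 0, (Real.sqrt (p - γ ^ 2 / 2) : ℂ)]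
              !![(0 : ℂ), (γ : ℂ); 0, (Real.sqrt (q - γ ^ 2 / 2) : ℂ)]
              !![(a : ℂ), 0; 0, (b : ℂ)] n x * f ((x : ℝ) / n))
        atTop (nhds (f (-1))) := by
  intro f
  have hγp : γ ^ 2 ≤ 2 * p := (Real.le_sqrt' hγ).1 (hγ'.trans (min_le_left _ _))
  have hγq : γ ^ 2 ≤ 2 * q := (Real.le_sqrt' hγ).1 (hγ'.trans (min_le_right _ _))
  have hs : 0 ≤ p - γ ^ 2 / 2 := by linarith
  have ht : 0 ≤ q - γ ^ 2 / 2 := by linarith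
  have hsum : γ ^ 2 + (p - γ ^ 2 / 2) + (q - γ ^ 2 / 2) = 1 := by linarith
  simp only [oqrwProb_eq, Real.sq_sqrt hs, Real.sq_sqrt ht]
  exact tendsto_tsum_mul_of_tendsto_tsum_mul_dist
    (fun n x => add_nonneg (upperEntry_nonneg (by positivity) hs ht ha hb n x)
      (lowerEntry_nonneg hs ht hb n x))
    (fun n => hab ▸ hasSum_upperEntry_add_lowerEntry hsum n)
    (fun n => summable_upperEntry_add_lowerEntry_mul _ n)
    (tendsto_tsum_mul_dist_neg_one (by positivity) hs ht hb hsum) f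

/-- Example 3, law of large numbers: for the OQRW generated by
`B = [[1,0],[0,√(p-γ²/2)]]`, `C = [[0,γ],[0,√(q-γ²/2)]]`, started at
`ρ₀ = [[a,0],[0,b]]`, the measures assigning mass `p_x^{(n)}` to `x/n`
converge weakly to `δ_{-1}`. -/
theorem oqrw_example3_lln (p q γ a b : ℝ)
    (hpq : p + q = 1) (hp : p ∈ Set.Ioo (0:ℝ) 1) (hq : q ∈ Set.Ioo (0:ℝ) 1)
    (hγ : 0 < γ) (hγ' : γ ≤ min (Real.sqrt (2 * p)) (Real.sqrt (2 * q)))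
    (ha : 0 ≤ a) (hb : 0 ≤ b) (hab : a + b = 1) :
    ∀ f : BoundedContinuousFunction ℝ ℝ,
      Tendsto (fun n : ℕ => ∑' x : ℤ,
          oqrwProb !![(1 : ℂ), 0; 0, (Real.sqrt (p - γ ^ 2 / 2) : ℂ)]
              !![(0 : ℂ), (γ : ℂ); 0, (Real.sqrt (q - γ ^ 2 / 2) : ℂ)]
              !![(a : ℂ), 0; 0, (b : ℂ)] n x * f ((x : ℝ) / n))
        atTop (nhds (f (-1))) :=
  oqrw_example3_lln_general p q γ a b hpq hγ hγ' ha hb hab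
end

section
/- Let p + q = 1 with p, q ∈ (0,1) and let 0 < γ ≤ min{√(2p), √(2q)}. Consider the OQRW on ℤ generated by B = [[1,0],[0,√(p−γ²/2)]] and C = [[0,γ],[0,√(q−γ²/2)]], with initial density matrix ρ₀ = [[a,0],[0,b]] (a + b = 1, a, b ≥ 0). Then for every α > 0, the probability measures μ_n on ℝ assigning mass p_x^{(n)} to the point (x + n)/n^α converge weakly, as n → ∞, to the Dirac measure δ_0. -/
/-!
The walk stays in `[-n, n]`, and since `B*B + C*C = 1` its total mass stays `Tr ρ₀ = 1`. Summing
the recursion over `x`, the internal state `∑ₓ ρₓ⁽ⁿ⁾` evolves under the channel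
`Φ M = B M B* + C M C*`, and `x + n` grows by `2` exactly on a `C`-step, so its mean is
`2 ∑_{k<n} Tr (C Φᵏ(ρ₀) C*)`. For the matrices at hand only the `(1,1)` entry of `Φᵏ(ρ₀)` feeds
the `C`-steps, and it decays like `b (1 - γ²)ᵏ`; hence the mean of `x + n` stays below `2b/γ²`,
the mean of `(x + n)/n^α` tends to `0`, and a Markov-type estimate gives weak convergence to `δ₀`.
-/

open MeasureTheory Filter Matrix
open scoped ComplexOrder

open Topology

theorem BoundedContinuousFunction.exists_dist_le_add_mul_dist {X Y : Type*}
    [PseudoMetricSpace X] [PseudoMetricSpace Y] (f : BoundedContinuousFunction X Y) (x₀ : X)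
    {ε : ℝ} (hε : 0 < ε) : ∃ K, ∀ x, dist (f x) (f x₀) ≤ ε + K * dist x x₀ := by
  obtain ⟨η, hη, hfη⟩ := Metric.continuousAt_iff.mp f.continuous.continuousAt ε hε
  obtain ⟨D, hD⟩ := f.bounded
  have hD₀ : 0 ≤ D := dist_nonneg.trans (hD x₀ x₀)
  refine ⟨D / η, fun x => ?_⟩
  have hK : 0 ≤ D / η * dist x x₀ := by positivity
  rcases lt_or_ge (dist x x₀) η with hx | hx
  · linarith [hfη hx]
  · calc dist (f x) (f x₀) ≤ D / η * η := by rw [div_mul_cancel₀ D hη.ne']; exact hD x x₀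
      _ ≤ D / η * dist x x₀ := by gcongr
      _ ≤ ε + D / η * dist x x₀ := by linarith

theorem tendsto_tsum_mul_apply_of_tendsto_tsum_mul_dist {ι X : Type*} [PseudoMetricSpace X]
    {w : ℕ → ι → ℝ} {t : ℕ → ι → X} {x₀ : X} (hw : ∀ n i, 0 ≤ w n i)
    (hw₁ : ∀ n, HasSum (w n) 1) (hwt : ∀ n, Summable fun i => w n i * dist (t n i) x₀)
    (hmom : Tendsto (fun n => ∑' i, w n i * dist (t n i) x₀) atTop (𝓝 0))
    (f : BoundedContinuousFunction X ℝ) :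
    Tendsto (fun n => ∑' i, w n i * f (t n i)) atTop (𝓝 (f x₀)) := by
  rw [Metric.tendsto_atTop]
  intro ε hε
  obtain ⟨K, hK⟩ := f.exists_dist_le_add_mul_dist x₀ (half_pos hε)
  have hsmall : ∀ᶠ n in atTop, K * ∑' i, w n i * dist (t n i) x₀ < ε / 2 := by
    have hKmom := hmom.const_mul K
    rw [mul_zero] at hKmom
    exact hKmom.eventually (gt_mem_nhds (half_pos hε))
  obtain ⟨N, hN⟩ := eventually_atTop.mp hsmall
  refine ⟨N, fun n hn => ?_⟩
  have hsf : Summable fun i => w n i * f (t n i) :=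
    ((hw₁ n).summable.mul_right ‖f‖).of_norm_bounded fun i => by
      rw [norm_mul, Real.norm_of_nonneg (hw n i)]
      exact mul_le_mul_of_nonneg_left (f.norm_coe_le_norm _) (hw n i)
  have hcentred : ∑' i, w n i * f (t n i) - f x₀ = ∑' i, w n i * (f (t n i) - f x₀) := by
    simp_rw [mul_sub]
    rw [hsf.tsum_sub ((hw₁ n).summable.mul_right _), tsum_mul_right, (hw₁ n).tsum_eq, one_mul]
  have hbound : HasSum (fun i => w n i * (ε / 2 + K * dist (t n i) x₀))
      (ε / 2 + K * ∑' i, w n i * dist (t n i) x₀) := by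
    have hsum := ((hw₁ n).mul_right (ε / 2)).add ((hwt n).hasSum.mul_left K)
    rw [one_mul] at hsum
    exact hsum.congr_fun fun i => by ring
  calc dist (∑' i, w n i * f (t n i)) (f x₀)
      = ‖∑' i, w n i * (f (t n i) - f x₀)‖ := by rw [dist_eq_norm, hcentred]
    _ ≤ ε / 2 + K * ∑' i, w n i * dist (t n i) x₀ :=
      tsum_of_norm_bounded hbound fun i => by
        rw [norm_mul, Real.norm_of_nonneg (hw n i), ← dist_eq_norm]
        exact mul_le_mul_of_nonneg_left (hK _) (hw n i)
    _ < ε := by linarith [hN n hn]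

theorem summable_of_eq_zero_of_lt_abs {M : Type*} [AddCommMonoid M] [TopologicalSpace M]
    (N : ℕ) {g : ℤ → M} (hg : ∀ x : ℤ, (N : ℤ) < |x| → g x = 0) : Summable g :=
  summable_of_ne_finset_zero (s := Finset.Icc (-(N : ℤ)) N) fun x hx => hg x <| by
    rw [Finset.mem_Icc, not_and_or, not_le, not_le] at hx
    rw [lt_abs]
    omega

section Walk

variable (B C : Matrix (Fin 2) (Fin 2) ℂ) {ρ₀ : Matrix (Fin 2) (Fin 2) ℂ}

theorem oqrwState_eq_zero_of_lt_abs :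
    ∀ {n : ℕ} {x : ℤ}, (n : ℤ) < |x| → oqrwState B C ρ₀ n x = 0
  | 0, x, hx => by simp [oqrwState, abs_pos.mp hx]
  | n + 1, x, hx => by
    rw [lt_abs] at hx
    rw [oqrwState, oqrwState_eq_zero_of_lt_abs (by rw [lt_abs]; omega),
      oqrwState_eq_zero_of_lt_abs (x := x - 1) (by rw [lt_abs]; omega)]
    simp

theorem oqrwProb_eq_zero_of_lt_abs {n : ℕ} {x : ℤ} (hx : (n : ℤ) < |x|) :
    oqrwProb B C ρ₀ n x = 0 := by
  simp [oqrwProb, oqrwState_eq_zero_of_lt_abs B C hx]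

theorem oqrwProb_mul_abs_displacement (n : ℕ) (x : ℤ) :
    oqrwProb B C ρ₀ n x * |(x : ℝ) + n| = oqrwProb B C ρ₀ n x * ((x : ℝ) + n) := by
  rcases lt_or_ge (n : ℤ) |x| with hx | hx
  · rw [oqrwProb_eq_zero_of_lt_abs B C hx, zero_mul, zero_mul]
  · have hx' : -(n : ℝ) ≤ x := by exact_mod_cast (abs_le.mp hx).1
    rw [abs_of_nonneg (by linarith)]

theorem summable_smul_oqrwState (g : ℤ → ℂ) (n : ℕ) :
    Summable fun x => g x • oqrwState B C ρ₀ n x :=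
  summable_of_eq_zero_of_lt_abs n fun _ hx => by
    rw [oqrwState_eq_zero_of_lt_abs B C hx, smul_zero]

theorem oqrwState_posSemidef (hρ₀ : ρ₀.PosSemidef) :
    ∀ n x, (oqrwState B C ρ₀ n x).PosSemidef
  | 0, x => by
    by_cases hx : x = 0 <;> simp [oqrwState, hx, hρ₀, PosSemidef.zero]
  | n + 1, x =>
    ((oqrwState_posSemidef hρ₀ n (x + 1)).mul_mul_conjTranspose_same B).add
      ((oqrwState_posSemidef hρ₀ n (x - 1)).mul_mul_conjTranspose_same C)

theorem oqrwProb_nonneg (hρ₀ : ρ₀.PosSemidef) (n : ℕ) (x : ℤ) :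
    0 ≤ oqrwProb B C ρ₀ n x :=
  (Complex.le_def.mp (oqrwState_posSemidef B C hρ₀ n x).trace_nonneg).1

theorem tsum_smul_oqrwState_succ (g : ℤ → ℂ) (n : ℕ) :
    ∑' x, g x • oqrwState B C ρ₀ (n + 1) x =
      B * (∑' y, g (y - 1) • oqrwState B C ρ₀ n y) * Bᴴ
        + C * (∑' y, g (y + 1) • oqrwState B C ρ₀ n y) * Cᴴ := by
  have hsummable (c : ℤ) : Summable fun x => g x • oqrwState B C ρ₀ n (x + c) := by
    have h := (Equiv.addRight c).summable_iff.mpr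
      (summable_smul_oqrwState B C (ρ₀ := ρ₀) (fun y => g (y - c)) n)
    simp only [Function.comp_def, Equiv.coe_addRight, add_sub_cancel_right] at h
    exact h
  have sandwich (A : Matrix (Fin 2) (Fin 2) ℂ) (c : ℤ) :
      ∑' x, A * (g x • oqrwState B C ρ₀ n (x + c)) * Aᴴ
        = A * (∑' y, g (y - c) • oqrwState B C ρ₀ n y) * Aᴴ := by
    have h := (Equiv.addRight c).tsum_eq fun y => g (y - c) • oqrwState B C ρ₀ n y
    simp only [Equiv.coe_addRight, add_sub_cancel_right] at h
    rw [((hsummable c).mul_left A).tsum_mul_right, (hsummable c).tsum_mul_left, h]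
  have step (x : ℤ) : g x • oqrwState B C ρ₀ (n + 1) x
      = B * (g x • oqrwState B C ρ₀ n (x + 1)) * Bᴴ
        + C * (g x • oqrwState B C ρ₀ n (x + -1)) * Cᴴ := by
    simp only [oqrwState, smul_add, Matrix.mul_smul, Matrix.smul_mul, ← sub_eq_add_neg]
  rw [tsum_congr step, (((hsummable 1).mul_left B).mul_right Bᴴ).tsum_add
    (((hsummable (-1)).mul_left C).mul_right Cᴴ), sandwich, sandwich]
  simp_rw [sub_neg_eq_add]

noncomputable def oqrwChannel (M : Matrix (Fin 2) (Fin 2) ℂ) : Matrix (Fin 2) (Fin 2) ℂ :=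
  B * M * Bᴴ + C * M * Cᴴ

theorem trace_oqrwChannel (h : Bᴴ * B + Cᴴ * C = 1) (M : Matrix (Fin 2) (Fin 2) ℂ) :
    (oqrwChannel B C M).trace = M.trace := by
  rw [oqrwChannel, trace_add, trace_mul_cycle, trace_mul_cycle C, ← trace_add, ← add_mul, h,
    one_mul]

theorem tsum_oqrwState (n : ℕ) :
    ∑' x, oqrwState B C ρ₀ n x = (oqrwChannel B C)^[n] ρ₀ := by
  induction n with
  | zero => simp [oqrwState]
  | succ n ih =>
    have h := tsum_smul_oqrwState_succ B C (ρ₀ := ρ₀) (fun _ => 1) n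
    simp only [one_smul] at h
    rw [h, ih, Function.iterate_succ_apply']
    rfl

theorem trace_iterate_oqrwChannel (h : Bᴴ * B + Cᴴ * C = 1) (n : ℕ)
    (M : Matrix (Fin 2) (Fin 2) ℂ) : ((oqrwChannel B C)^[n] M).trace = M.trace := by
  induction n with
  | zero => rfl
  | succ n ih => rw [Function.iterate_succ_apply', trace_oqrwChannel B C h, ih]

theorem tsum_displacement_smul_oqrwState_succ (n : ℕ) :
    ∑' x : ℤ, ((x : ℂ) + (n + 1 : ℕ)) • oqrwState B C ρ₀ (n + 1) x
      = oqrwChannel B C (∑' x : ℤ, ((x : ℂ) + n) • oqrwState B C ρ₀ n x)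
        + (2 : ℂ) • (C * (oqrwChannel B C)^[n] ρ₀ * Cᴴ) := by
  have hleft : ∑' y : ℤ, (((y - 1 : ℤ) : ℂ) + (n + 1 : ℕ)) • oqrwState B C ρ₀ n y
      = ∑' y : ℤ, ((y : ℂ) + n) • oqrwState B C ρ₀ n y := by
    congr 1
    funext y
    push_cast
    congr 1
    ring
  have hright : ∑' y : ℤ, (((y + 1 : ℤ) : ℂ) + (n + 1 : ℕ)) • oqrwState B C ρ₀ n y
      = ∑' y : ℤ, ((y : ℂ) + n) • oqrwState B C ρ₀ n y + (2 : ℂ) • (oqrwChannel B C)^[n] ρ₀ := by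
    rw [← tsum_oqrwState, ← tsum_const_smul'', ← (summable_smul_oqrwState B C _ n).tsum_add
      (summable_smul_oqrwState B C (fun _ => 2) n)]
    congr 1
    funext y
    push_cast
    rw [← add_smul]
    congr 1
    ring
  rw [tsum_smul_oqrwState_succ, hleft, hright, oqrwChannel, Matrix.mul_add, Matrix.add_mul,
    Matrix.mul_smul, Matrix.smul_mul]
  abel

theorem tsum_oqrwProb_mul (g : ℤ → ℝ) (n : ℕ) :
    ∑' x, oqrwProb B C ρ₀ n x * g x = (∑' x, (g x : ℂ) • oqrwState B C ρ₀ n x).trace.re := by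
  have hmap := (summable_smul_oqrwState B C (ρ₀ := ρ₀) (fun x => (g x : ℂ)) n).map_tsum
    (Complex.reAddGroupHom.comp (traceAddMonoidHom (Fin 2) ℂ))
    (Complex.continuous_re.comp continuous_id.matrix_trace)
  simp only [AddMonoidHom.coe_comp, Function.comp_apply, Complex.coe_reAddGroupHom,
    traceAddMonoidHom_apply, trace_smul, smul_eq_mul, Complex.re_ofReal_mul] at hmap
  rw [hmap]
  simp only [oqrwProb, mul_comm]

theorem hasSum_oqrwProb (h : Bᴴ * B + Cᴴ * C = 1) (n : ℕ) :
    HasSum (oqrwProb B C ρ₀ n) ρ₀.trace.re := by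
  have hsum : Summable (oqrwProb B C ρ₀ n) :=
    summable_of_eq_zero_of_lt_abs n fun _ => oqrwProb_eq_zero_of_lt_abs B C
  have htsum := tsum_oqrwProb_mul B C (ρ₀ := ρ₀) (fun _ => 1) n
  simp only [mul_one, Complex.ofReal_one, one_smul, tsum_oqrwState,
    trace_iterate_oqrwChannel B C h] at htsum
  exact htsum ▸ hsum.hasSum

theorem tsum_oqrwProb_mul_displacement (h : Bᴴ * B + Cᴴ * C = 1) (n : ℕ) :
    ∑' x, oqrwProb B C ρ₀ n x * ((x : ℝ) + n)
      = 2 * ∑ k ∈ Finset.range n, (C * (oqrwChannel B C)^[k] ρ₀ * Cᴴ).trace.re := by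
  rw [tsum_oqrwProb_mul]
  push_cast
  induction n with
  | zero => simp [oqrwState]
  | succ n ih =>
    rw [tsum_displacement_smul_oqrwState_succ, trace_add, trace_oqrwChannel B C h, trace_smul,
      Complex.add_re, ih, Finset.sum_range_succ]
    simp only [smul_eq_mul, Complex.mul_re, Complex.re_ofNat, Complex.im_ofNat, zero_mul,
      sub_zero]
    ring

end Walk

namespace OQRWExample3

variable (β γ δ : ℝ)

theorem conjTranspose_mul_self_add_eq_one (h : β ^ 2 + γ ^ 2 + δ ^ 2 = 1) :
    (!![(1 : ℂ), 0; 0, (β : ℂ)])ᴴ * !![(1 : ℂ), 0; 0, (β : ℂ)]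
      + (!![(0 : ℂ), (γ : ℂ); 0, (δ : ℂ)])ᴴ * !![(0 : ℂ), (γ : ℂ); 0, (δ : ℂ)] = 1 := by
  have h' : (β : ℂ) ^ 2 + (γ : ℂ) ^ 2 + (δ : ℂ) ^ 2 = 1 := by exact_mod_cast h
  ext i j
  fin_cases i <;> fin_cases j <;>
    simp only [Fin.zero_eta, Fin.mk_one, Fin.isValue, Matrix.add_apply, Matrix.mul_apply,
      conjTranspose_apply, of_apply, cons_val', cons_val_zero, cons_val_one, cons_val_fin_one,
      RCLike.star_def, Fin.sum_univ_two, map_one, map_zero, Complex.conj_ofReal, mul_one,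
      mul_zero, zero_mul, add_zero, zero_add, one_apply_eq, one_apply_ne, ne_eq, zero_ne_one,
      one_ne_zero, not_false_eq_true]
  linear_combination h'

theorem oqrwChannel_apply_one_one (M : Matrix (Fin 2) (Fin 2) ℂ) :
    oqrwChannel !![(1 : ℂ), 0; 0, (β : ℂ)] !![(0 : ℂ), (γ : ℂ); 0, (δ : ℂ)] M 1 1
      = ((β ^ 2 + δ ^ 2 : ℝ) : ℂ) * M 1 1 := by
  simp only [oqrwChannel, Matrix.add_apply, Matrix.mul_apply, conjTranspose_apply,
    Fin.sum_univ_two, of_apply, cons_val', cons_val_zero, cons_val_one, cons_val_fin_one,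
    RCLike.star_def, Complex.conj_ofReal, map_zero]
  push_cast
  ring

theorem iterate_oqrwChannel_apply_one_one (k : ℕ) (M : Matrix (Fin 2) (Fin 2) ℂ) :
    (oqrwChannel !![(1 : ℂ), 0; 0, (β : ℂ)] !![(0 : ℂ), (γ : ℂ); 0, (δ : ℂ)])^[k] M 1 1
      = (((β ^ 2 + δ ^ 2) ^ k : ℝ) : ℂ) * M 1 1 := by
  induction k with
  | zero => simp
  | succ k ih =>
    rw [Function.iterate_succ_apply', oqrwChannel_apply_one_one, ih]
    push_cast
    ring

theorem trace_mul_mul_conjTranspose (M : Matrix (Fin 2) (Fin 2) ℂ) :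
    (!![(0 : ℂ), (γ : ℂ); 0, (δ : ℂ)] * M * (!![(0 : ℂ), (γ : ℂ); 0, (δ : ℂ)])ᴴ).trace
      = ((γ ^ 2 + δ ^ 2 : ℝ) : ℂ) * M 1 1 := by
  simp only [trace_fin_two, Matrix.mul_apply, conjTranspose_apply, Fin.sum_univ_two,
    of_apply, cons_val', cons_val_zero, cons_val_one, cons_val_fin_one, RCLike.star_def,
    Complex.conj_ofReal, map_zero]
  push_cast
  ring

theorem tsum_oqrwProb_mul_displacement_le (h : β ^ 2 + γ ^ 2 + δ ^ 2 = 1) (hγ : 0 < γ)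
    (a : ℝ) {b : ℝ} (hb : 0 ≤ b) (n : ℕ) :
    ∑' x, oqrwProb !![(1 : ℂ), 0; 0, (β : ℂ)] !![(0 : ℂ), (γ : ℂ); 0, (δ : ℂ)]
        !![(a : ℂ), 0; 0, (b : ℂ)] n x * ((x : ℝ) + n) ≤ 2 * b / γ ^ 2 := by
  rw [tsum_oqrwProb_mul_displacement _ _ (conjTranspose_mul_self_add_eq_one β γ δ h)]
  simp_rw [trace_mul_mul_conjTranspose, iterate_oqrwChannel_apply_one_one]
  have hterm (k : ℕ) : (((γ ^ 2 + δ ^ 2 : ℝ) : ℂ) * ((((β ^ 2 + δ ^ 2) ^ k : ℝ) : ℂ)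
      * !![(a : ℂ), 0; 0, (b : ℂ)] 1 1)).re = (γ ^ 2 + δ ^ 2) * b * (β ^ 2 + δ ^ 2) ^ k := by
    simp only [of_apply, cons_val_one, cons_val_zero, ← Complex.ofReal_mul,
      Complex.ofReal_re]
    ring
  have hgeom : ∑ k ∈ Finset.range n, (β ^ 2 + δ ^ 2) ^ k ≤ 1 / γ ^ 2 := by
    have hr : β ^ 2 + δ ^ 2 = 1 - γ ^ 2 := by linarith
    have := geom_sum_Ico_le_of_lt_one (m := 0) (n := n) (x := β ^ 2 + δ ^ 2) (by positivity)
      (by linarith [pow_pos hγ 2])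
    rwa [← Finset.range_eq_Ico, pow_zero, hr, sub_sub_cancel, ← hr] at this
  have hc : γ ^ 2 + δ ^ 2 ≤ 1 := by linarith [sq_nonneg β]
  rw [Finset.sum_congr rfl fun k _ => hterm k, ← Finset.mul_sum]
  calc 2 * ((γ ^ 2 + δ ^ 2) * b * ∑ k ∈ Finset.range n, (β ^ 2 + δ ^ 2) ^ k)
      ≤ 2 * (1 * b * (1 / γ ^ 2)) := by gcongr
    _ = 2 * b / γ ^ 2 := by ring

end OQRWExample3

theorem oqrw_example3_scaling_general (p q γ a b : ℝ)
    (hpq : p + q = 1)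
    (hγ : 0 < γ) (hγ' : γ ≤ min (Real.sqrt (2 * p)) (Real.sqrt (2 * q)))
    (ha : 0 ≤ a) (hb : 0 ≤ b) (hab : a + b = 1) (α : ℝ) (hα : 0 < α) :
    ∀ f : BoundedContinuousFunction ℝ ℝ,
      Tendsto (fun n : ℕ => ∑' x : ℤ,
          oqrwProb !![(1 : ℂ), 0; 0, (Real.sqrt (p - γ ^ 2 / 2) : ℂ)]
              !![(0 : ℂ), (γ : ℂ); 0, (Real.sqrt (q - γ ^ 2 / 2) : ℂ)]
              !![(a : ℂ), 0; 0, (b : ℂ)] n x * f (((x : ℝ) + n) / (n : ℝ) ^ α))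
        atTop (nhds (f 0)) := by
  intro f
  have hp : γ ^ 2 ≤ 2 * p := (Real.le_sqrt' hγ).mp (hγ'.trans (min_le_left _ _))
  have hq : γ ^ 2 ≤ 2 * q := (Real.le_sqrt' hγ).mp (hγ'.trans (min_le_right _ _))
  have hunit : √(p - γ ^ 2 / 2) ^ 2 + γ ^ 2 + √(q - γ ^ 2 / 2) ^ 2 = 1 := by
    rw [Real.sq_sqrt (by linarith), Real.sq_sqrt (by linarith)]
    linarith
  have hρ₀ : (!![(a : ℂ), 0; 0, (b : ℂ)]).PosSemidef := by
    rw [← diagonal_vec2]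
    exact posSemidef_diagonal_iff.mpr fun i => by fin_cases i <;> simpa
  set w := oqrwProb !![(1 : ℂ), 0; 0, (Real.sqrt (p - γ ^ 2 / 2) : ℂ)]
    !![(0 : ℂ), (γ : ℂ); 0, (Real.sqrt (q - γ ^ 2 / 2) : ℂ)] !![(a : ℂ), 0; 0, (b : ℂ)]
  have hmass (n : ℕ) : HasSum (w n) 1 := by
    convert hasSum_oqrwProb _ _
      (OQRWExample3.conjTranspose_mul_self_add_eq_one _ _ _ hunit) n using 1
    simp [trace_fin_two, hab]
  have hmoment (n : ℕ) : ∑' x : ℤ, w n x * dist (((x : ℝ) + n) / (n : ℝ) ^ α) 0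
      = (∑' x : ℤ, w n x * ((x : ℝ) + n)) / (n : ℝ) ^ α := by
    rw [← tsum_div_const]
    refine tsum_congr fun x => ?_
    rw [Real.dist_0_eq_abs, abs_div, abs_of_nonneg (Real.rpow_nonneg n.cast_nonneg α),
      ← mul_div_assoc, oqrwProb_mul_abs_displacement]
  have hdecay : Tendsto (fun n : ℕ => 2 * b / γ ^ 2 / (n : ℝ) ^ α) atTop (𝓝 0) :=
    tendsto_const_nhds.div_atTop ((tendsto_rpow_atTop hα).comp tendsto_natCast_atTop_atTop)
  have hmoment_tendsto :
      Tendsto (fun n : ℕ => ∑' x : ℤ, w n x * dist (((x : ℝ) + n) / (n : ℝ) ^ α) 0) atTop (𝓝 0) :=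
    squeeze_zero (fun n => tsum_nonneg fun x => mul_nonneg (oqrwProb_nonneg _ _ hρ₀ n x)
      dist_nonneg) (fun n => hmoment n ▸ div_le_div_of_nonneg_right
        (OQRWExample3.tsum_oqrwProb_mul_displacement_le _ _ _ hunit hγ a hb n) (by positivity))
      hdecay
  exact tendsto_tsum_mul_apply_of_tendsto_tsum_mul_dist (oqrwProb_nonneg _ _ hρ₀) hmass
    (fun n => summable_of_eq_zero_of_lt_abs n fun x hx => by
      rw [oqrwProb_eq_zero_of_lt_abs _ _ hx, zero_mul]) hmoment_tendsto f

/-- Example 3, law of large numbers: for the OQRW generated by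
`B = [[1,0],[0,√(p-γ²/2)]]`, `C = [[0,γ],[0,√(q-γ²/2)]]`, started at
`ρ₀ = [[a,0],[0,b]]`, the measures assigning mass `p_x^{(n)}` to `(x+n)/n^α`
converge weakly to `δ_0` for each scaling exponent `α > 0`. -/
theorem oqrw_example3_scaling (p q γ a b : ℝ)
    (hpq : p + q = 1) (hp : p ∈ Set.Ioo (0:ℝ) 1) (hq : q ∈ Set.Ioo (0:ℝ) 1)
    (hγ : 0 < γ) (hγ' : γ ≤ min (Real.sqrt (2 * p)) (Real.sqrt (2 * q)))
    (ha : 0 ≤ a) (hb : 0 ≤ b) (hab : a + b = 1) (α : ℝ) (hα : 0 < α) :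
    ∀ f : BoundedContinuousFunction ℝ ℝ,
      Tendsto (fun n : ℕ => ∑' x : ℤ,
          oqrwProb !![(1 : ℂ), 0; 0, (Real.sqrt (p - γ ^ 2 / 2) : ℂ)]
              !![(0 : ℂ), (γ : ℂ); 0, (Real.sqrt (q - γ ^ 2 / 2) : ℂ)]
              !![(a : ℂ), 0; 0, (b : ℂ)] n x * f (((x : ℝ) + n) / (n : ℝ) ^ α))
        atTop (nhds (f 0)) :=
  oqrw_example3_scaling_general p q γ a b hpq hγ hγ' ha hb hab α hα
end
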